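/- arXiv:math/9202202 — 7 statements merged into one kernel-verified Lean document; each statement's English description precedes it below -/
import Mathlib

section
/- Let X be a real Banach space and φ : [0,1] → X a McShane integrable function. Then for any Lebesgue measurable set E ⊆ [0,1] the function φ_E = φ·χ(E) : [0,1] → X, defined by φ_E(t) = φ(t) if t ∈ E and φ_E(t) = 0 otherwise, is McShane integrable. -/
open MeasureTheory Filter Set

noncomputable section

/-- A McShane partition of `[0,1]`: a finite family of non-overlapping closed intervals
`[a i, b i]` covering `[0,1]`, with tags `t i ∈ [0,1]`. -/
def IsMcShanePartition (n : ℕ) (a b t : Fin n → ℝ) : Prop :=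
  (∀ i, a i ≤ b i) ∧ (∀ i, t i ∈ Set.Icc (0:ℝ) 1) ∧
  (⋃ i, Set.Icc (a i) (b i)) = Set.Icc (0:ℝ) 1 ∧
  Pairwise fun i j => Set.Ioo (a i) (b i) ∩ Set.Ioo (a j) (b j) = ∅

/-- The partition is subordinate to the gauge `δ`. -/
def SubordinateTo (n : ℕ) (a b t : Fin n → ℝ) (δ : ℝ → ℝ) : Prop :=
  ∀ i, t i - δ (t i) ≤ a i ∧ b i ≤ t i + δ (t i)

/-- `φ : [0,1] → X` is McShane integrable with integral `w`. -/
def HasMcShaneIntegral {X : Type*} [NormedAddCommGroup X] [NormedSpace ℝ X]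
    (φ : ℝ → X) (w : X) : Prop :=
  ∀ ε > (0:ℝ), ∃ δ : ℝ → ℝ, (∀ s ∈ Set.Icc (0:ℝ) 1, 0 < δ s) ∧
    ∀ (n : ℕ) (a b t : Fin n → ℝ), IsMcShanePartition n a b t →
      SubordinateTo n a b t δ →
      ‖w - ∑ i, (b i - a i) • φ (t i)‖ ≤ ε

/-- `wE` is the Pettis integral of `φ` over `E`. -/
def HasPettisIntegralOn {X : Type*} [NormedAddCommGroup X] [NormedSpace ℝ X]
    (φ : ℝ → X) (E : Set ℝ) (wE : X) : Prop :=
  ∀ f : X →L[ℝ] ℝ, IntegrableOn (fun s => f (φ s)) E volume ∧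
    (∫ s in E, f (φ s)) = f wE

/-- `φ : [0,1] → X` is Pettis integrable. -/
def PettisIntegrable {X : Type*} [NormedAddCommGroup X] [NormedSpace ℝ X]
    (φ : ℝ → X) : Prop :=
  ∀ E : Set ℝ, MeasurableSet E → E ⊆ Set.Icc (0:ℝ) 1 →
    ∃ wE : X, HasPettisIntegralOn φ E wE

/-- `P` is the product, over `ℕ`, of copies of the measure `μ`. -/
def IsNatPowerOf {S : Type*} [MeasurableSpace S] (μ : Measure S) (P : Measure (ℕ → S)) : Prop :=
  ∀ (F : Finset ℕ) (A : ℕ → Set S), (∀ i ∈ F, MeasurableSet (A i)) →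
    P {s | ∀ i ∈ F, s i ∈ A i} = ∏ i ∈ F, μ (A i)

/-- `φ : [0,1] → X` is Talagrand integrable with integral `w` : for almost every sequence
in `[0,1]` (for the product probability on `[0,1]^ℕ`) the averages of `φ` converge to `w`. -/
def HasTalagrandIntegral {X : Type*} [NormedAddCommGroup X] [NormedSpace ℝ X]
    (φ : ℝ → X) (w : X) : Prop :=
  ∀ P : Measure (ℕ → ℝ), IsNatPowerOf (volume.restrict (Set.Icc (0:ℝ) 1)) P →
    ∀ᵐ s ∂P, Tendsto (fun n : ℕ => (n : ℝ)⁻¹ • ∑ i ∈ Finset.range n, φ (s i))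
      atTop (nhds w)

def TalagrandIntegrable {X : Type*} [NormedAddCommGroup X] [NormedSpace ℝ X]
    (φ : ℝ → X) : Prop :=
  ∃ w, HasTalagrandIntegral φ w

/-- A set `A` of real-valued functions is stable with respect to `μ`. -/
def Stable {S : Type*} [MeasurableSpace S] (μ : Measure S) (A : Set (S → ℝ)) : Prop :=
  ∀ E : Set S, MeasurableSet E → 0 < μ E → ∀ α β : ℝ, α < β →
    ∃ m n : ℕ, 0 < m ∧ 0 < n ∧
      (Measure.prod (Measure.pi fun _ : Fin m => μ) (Measure.pi fun _ : Fin n => μ))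
        {p : (Fin m → S) × (Fin n → S) |
          (∀ i, p.1 i ∈ E) ∧ (∀ j, p.2 j ∈ E) ∧
          ∃ f ∈ A, (∀ i, f (p.1 i) ≤ α) ∧ (∀ j, β ≤ f (p.2 j))}
        < μ E ^ (m + n)

end

/-! The McShane integral satisfies the Cauchy criterion, so it suffices to find, for each `ε`, a
gauge for which the Riemann sums of `φ·χ(E)` over any two fine partitions are `8ε`-close. Take
`K ⊆ E ⊆ U` with `K` compact, `U` open and `|U \ K|` small, and shrink the gauge so that the balls
around tags in `E` stay inside `U` while those around tags outside `E` miss `K`. On the common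
refinement of two fine partitions, a piece whose two tags disagree about membership in `E` then
lies in `U \ K`; these pieces contribute little by a Saks–Henstock estimate, and on the others
the two sums compare like two Riemann sums of `φ` itself. -/

open Metric

theorem IsCompact.exists_finset_ball_subset_ball {α : Type*} [PseudoMetricSpace α]
    {s : Set α} (hs : IsCompact s) {δ : α → ℝ} (hδ : ∀ x ∈ s, 0 < δ x) :
    ∃ T : Finset α, ∃ ρ > 0, ↑T ⊆ s ∧ ∀ x ∈ s, ∃ t ∈ T, ball x ρ ⊆ ball t (δ t) := by
  obtain ⟨T, hTs, hTfin, hcov⟩ := hs.elim_finite_subcover_image (b := s)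
    (c := fun t => ball t (δ t)) (fun _ _ => isOpen_ball)
    fun x hx => mem_biUnion hx (mem_ball_self (hδ x hx))
  obtain ⟨ρ, hρ, hleb⟩ := lebesgue_number_lemma_of_metric (c := fun t : T => ball (t : α) (δ t))
    hs (fun _ => isOpen_ball) (by simpa only [iUnion_subtype] using hcov)
  refine ⟨hTfin.toFinset, ρ, hρ, by simpa using hTs, fun x hx => ?_⟩
  obtain ⟨t, ht⟩ := hleb x hx
  exact ⟨t, by simp, ht⟩

theorem MeasurableSet.exists_isCompact_isOpen_sdiff_lt {α : Type*} [MeasurableSpace α]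
    [TopologicalSpace α] [OpensMeasurableSpace α] [T2Space α] {μ : Measure α} [μ.OuterRegular]
    [μ.InnerRegularCompactLTTop] {E : Set α} (hE : MeasurableSet E) (hE' : μ E ≠ ⊤)
    {ε : ENNReal} (hε : ε ≠ 0) :
    ∃ K U, K ⊆ E ∧ E ⊆ U ∧ IsCompact K ∧ IsOpen U ∧ μ (U \ K) < ε := by
  have hε2 : ε / 2 ≠ 0 := (ENNReal.half_pos hε).ne'
  obtain ⟨U, hEU, hU, -, hUE⟩ := hE.exists_isOpen_sdiff_lt hE' hε2
  obtain ⟨K, hKE, hK, hEK⟩ := hE.exists_isCompact_sdiff_lt hE' hε2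
  refine ⟨K, U, hKE, hEU, hK, hU, ?_⟩
  calc μ (U \ K) ≤ μ (U \ E) + μ (E \ K) :=
        (measure_mono (sdiff_triangle U E K)).trans (measure_union_le _ _)
    _ < ε / 2 + ε / 2 := ENNReal.add_lt_add hUE hEK
    _ = ε := ENNReal.add_halves ε

theorem exists_pos_closedBall_subset_of_mem_of_notMem {α : Type*} [PseudoMetricSpace α]
    {E U K : Set α} (hU : IsOpen U) (hK : IsClosed K) (hEU : E ⊆ U) (hKE : K ⊆ E) :
    ∃ γ : α → ℝ, (∀ r, 0 < γ r) ∧ (∀ r ∈ E, closedBall r (γ r) ⊆ U) ∧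
      ∀ r ∉ E, closedBall r (γ r) ⊆ Kᶜ := by
  classical
  have (r : α) : ∃ γ > 0, closedBall r γ ⊆ if r ∈ E then U else Kᶜ := by
    refine nhds_basis_closedBall.mem_iff.1 (IsOpen.mem_nhds ?_ ?_) <;> split_ifs with hr
    exacts [hU, hK.isOpen_compl, hEU hr, fun h => hr (hKE h)]
  choose γ hγ hsub using this
  exact ⟨γ, hγ, fun r hr => by simpa [hr] using hsub r, fun r hr => by simpa [hr] using hsub r⟩

namespace McShane

variable {ι ι' κ : Type*} {X : Type*} [NormedAddCommGroup X] [NormedSpace ℝ X]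

structure IsPartition (a b : ι → ℝ) : Prop where
  le : ∀ i, a i ≤ b i
  iUnion_Icc : ⋃ i, Icc (a i) (b i) = Icc 0 1
  pairwise_inter : Pairwise fun i j => Ioo (a i) (b i) ∩ Ioo (a j) (b j) = ∅

structure IsFinePartition (a b t : ι → ℝ) (δ : ℝ → ℝ) : Prop extends IsPartition a b where
  tag_mem : ∀ i, t i ∈ Icc (0 : ℝ) 1
  Icc_subset_closedBall : ∀ i, Icc (a i) (b i) ⊆ closedBall (t i) (δ (t i))

namespace IsPartition

variable {a b : ι → ℝ} {a' b' : ι' → ℝ}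

theorem Icc_subset (h : IsPartition a b) (i : ι) : Icc (a i) (b i) ⊆ Icc 0 1 :=
  h.iUnion_Icc ▸ subset_iUnion (fun j => Icc (a j) (b j)) i

theorem aedisjoint (h : IsPartition a b) :
    Pairwise fun i j => AEDisjoint volume (Icc (a i) (b i)) (Icc (a j) (b j)) := fun _ _ hij =>
  (Disjoint.aedisjoint (disjoint_iff_inter_eq_empty.2 (h.pairwise_inter hij))).congr
    Ioo_ae_eq_Icc.symm Ioo_ae_eq_Icc.symm

theorem volume_eq_sum_inter [Fintype ι] (h : IsPartition a b) {S : Set ℝ}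
    (hS : S ⊆ Icc 0 1) (hSm : NullMeasurableSet S) :
    volume S = ∑ i, volume (S ∩ Icc (a i) (b i)) := by
  rw [← measure_biUnion_finset₀ (fun i _ j _ hij => (h.aedisjoint hij).mono
      inter_subset_right inter_subset_right)
    (fun i _ => hSm.inter measurableSet_Icc.nullMeasurableSet)]
  simp only [Finset.mem_univ, iUnion_true, ← inter_iUnion, h.iUnion_Icc, inter_eq_left.2 hS]

theorem ofReal_sum_le_volume (h : IsPartition a b) {S : Finset ι} {W : Set ℝ}
    (hW : ∀ i ∈ S, Icc (a i) (b i) ⊆ W) :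
    ENNReal.ofReal (∑ i ∈ S, (b i - a i)) ≤ volume W := by
  rw [ENNReal.ofReal_sum_of_nonneg fun i _ => sub_nonneg.2 (h.le i)]
  simp_rw [← Real.volume_Icc]
  rw [← measure_biUnion_finset₀ (fun i _ j _ hij => h.aedisjoint hij)
    (fun i _ => measurableSet_Icc.nullMeasurableSet)]
  exact measure_mono (iUnion₂_subset hW)

theorem sum_fiber_sub [Fintype ι'] [DecidableEq ι] (h : IsPartition a b)
    (h' : IsPartition a' b') {π : ι' → ι}
    (hπ : ∀ p, Icc (a' p) (b' p) ⊆ Icc (a (π p)) (b (π p))) (i : ι) :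
    ∑ p with π p = i, (b' p - a' p) = b i - a i := by
  have hfiber : ∀ p, volume (Icc (a i) (b i) ∩ Icc (a' p) (b' p)) =
      if π p = i then volume (Icc (a' p) (b' p)) else 0 := by
    intro p
    split_ifs with hp
    · rw [inter_eq_right.2 (hp ▸ hπ p)]
    · exact measure_mono_null (inter_subset_inter_right _ (hπ p))
        (h.aedisjoint (Ne.symm hp))
  have hvol := h'.volume_eq_sum_inter (h.Icc_subset i) measurableSet_Icc.nullMeasurableSet
  simp only [hfiber, Finset.sum_ite, Finset.sum_const_zero, add_zero, Real.volume_Icc] at hvol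
  rw [← ENNReal.ofReal_sum_of_nonneg fun p _ => sub_nonneg.2 (h'.le p)] at hvol
  exact ((ENNReal.ofReal_eq_ofReal_iff (sub_nonneg.2 (h.le i))
    (Finset.sum_nonneg fun p _ => sub_nonneg.2 (h'.le p))).1 hvol).symm

theorem sum_smul_comp [Fintype ι] [Fintype ι'] (h : IsPartition a b) (h' : IsPartition a' b')
    {π : ι' → ι} (hπ : ∀ p, Icc (a' p) (b' p) ⊆ Icc (a (π p)) (b (π p))) (g : ι → X) :
    ∑ p, (b' p - a' p) • g (π p) = ∑ i, (b i - a i) • g i := by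
  classical
  rw [← Finset.sum_fiberwise Finset.univ π]
  refine Finset.sum_congr rfl fun i _ => ?_
  rw [← h.sum_fiber_sub h' hπ i, Finset.sum_smul]
  exact Finset.sum_congr rfl fun p hp => by rw [(Finset.mem_filter.1 hp).2]

theorem sum_smul_comp_ite [Fintype ι] [Fintype ι'] [DecidableEq ι] (h : IsPartition a b)
    (h' : IsPartition a' b') {π : ι' → ι}
    (hπ : ∀ p, Icc (a' p) (b' p) ⊆ Icc (a (π p)) (b (π p))) (S : Finset ι) (v : ι → X) :
    ∑ p, (b' p - a' p) • (if π p ∈ S then v (π p) else 0) = ∑ i ∈ S, (b i - a i) • v i := by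
  rw [h.sum_smul_comp h' hπ fun i => if i ∈ S then v i else 0]
  simp only [smul_ite, smul_zero, Finset.sum_ite_mem, Finset.univ_inter]

end IsPartition

section Refinement

variable {a b : ι → ℝ} {c d : κ → ℝ}

abbrev InterIndex (a b : ι → ℝ) (c d : κ → ℝ) : Type _ :=
  {p : ι × κ // max (a p.1) (c p.2) ≤ min (b p.1) (d p.2)}

theorem Icc_inter_fst_subset (p : InterIndex a b c d) :
    Icc (max (a p.1.1) (c p.1.2)) (min (b p.1.1) (d p.1.2)) ⊆ Icc (a p.1.1) (b p.1.1) :=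
  Icc_inter_Icc.symm.trans_subset inter_subset_left

theorem Icc_inter_snd_subset (p : InterIndex a b c d) :
    Icc (max (a p.1.1) (c p.1.2)) (min (b p.1.1) (d p.1.2)) ⊆ Icc (c p.1.2) (d p.1.2) :=
  Icc_inter_Icc.symm.trans_subset inter_subset_right

theorem IsPartition.inter (hP : IsPartition a b) (hQ : IsPartition c d) :
    IsPartition (fun p : InterIndex a b c d => max (a p.1.1) (c p.1.2))
      (fun p => min (b p.1.1) (d p.1.2)) where
  le p := p.2
  iUnion_Icc := by
    refine subset_antisymm (iUnion_subset fun p => ?_) fun x hx => ?_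
    · exact (Icc_inter_fst_subset p).trans (hP.Icc_subset _)
    · obtain ⟨i, hi⟩ := mem_iUnion.1 (hP.iUnion_Icc.symm ▸ hx)
      obtain ⟨j, hj⟩ := mem_iUnion.1 (hQ.iUnion_Icc.symm ▸ hx)
      have hx' : x ∈ Icc (max (a i) (c j)) (min (b i) (d j)) := by
        rw [← Icc_inter_Icc]; exact ⟨hi, hj⟩
      exact mem_iUnion.2 ⟨⟨(i, j), hx'.1.trans hx'.2⟩, hx'⟩
  pairwise_inter p q hpq := by
    simp only [← Ioo_inter_Ioo]
    by_cases hi : p.1.1 = q.1.1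
    · have hj : p.1.2 ≠ q.1.2 := fun hj => hpq (Subtype.ext (Prod.ext hi hj))
      exact subset_empty_iff.1 <| (hQ.pairwise_inter hj).subset.trans' <|
        inter_subset_inter inter_subset_right inter_subset_right
    · exact subset_empty_iff.1 <| (hP.pairwise_inter hi).subset.trans' <|
        inter_subset_inter inter_subset_left inter_subset_left

/-- `τ` agrees with `t` except on pieces whose two tags both lie in `E`, so that the pieces with
tags on opposite sides of `E` are isolated in the last two sums. -/
theorem IsPartition.sum_indicator_sub_sum_indicator [Fintype ι] [Fintype κ] {E : Set ℝ}
    [DecidablePred (· ∈ E)] (hP : IsPartition a b) (hQ : IsPartition c d) (φ : ℝ → X)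
    (t : ι → ℝ) (s : κ → ℝ) :
    let ℓ : InterIndex a b c d → ℝ := fun p => min (b p.1.1) (d p.1.2) - max (a p.1.1) (c p.1.2)
    let τ : InterIndex a b c d → ℝ := fun p =>
      if t p.1.1 ∈ E ∧ s p.1.2 ∈ E then s p.1.2 else t p.1.1
    ∑ i, (b i - a i) • E.indicator φ (t i) - ∑ j, (d j - c j) • E.indicator φ (s j) =
      (∑ p, ℓ p • φ (t p.1.1) - ∑ p, ℓ p • φ (τ p)) +
        ∑ p with t p.1.1 ∈ E ∧ s p.1.2 ∉ E, ℓ p • φ (t p.1.1) -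
        ∑ p with t p.1.1 ∉ E ∧ s p.1.2 ∈ E, ℓ p • φ (s p.1.2) := by
  intro ℓ τ
  have hR := hP.inter hQ
  rw [← hP.sum_smul_comp hR Icc_inter_fst_subset, ← hQ.sum_smul_comp hR Icc_inter_snd_subset,
    Finset.sum_filter, Finset.sum_filter, ← Finset.sum_sub_distrib, ← Finset.sum_sub_distrib,
    ← Finset.sum_add_distrib, ← Finset.sum_sub_distrib]
  refine Finset.sum_congr rfl fun p _ => ?_
  by_cases ht : t p.1.1 ∈ E <;> by_cases hs : s p.1.2 ∈ E <;> simp [τ, ℓ, ht, hs]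

end Refinement

namespace IsFinePartition

variable {a b t : ι → ℝ} {c d s : κ → ℝ} {δ : ℝ → ℝ}

theorem of_fin {n : ℕ} {a b t : Fin n → ℝ} (hP : IsMcShanePartition n a b t)
    (hs : SubordinateTo n a b t δ) : IsFinePartition a b t δ where
  le := hP.1
  iUnion_Icc := hP.2.2.1
  pairwise_inter := hP.2.2.2
  tag_mem := hP.2.1
  Icc_subset_closedBall i := by
    rw [Real.closedBall_eq_Icc]; exact Icc_subset_Icc (hs i).1 (hs i).2

theorem mono (h : IsFinePartition a b t δ) {δ' : ℝ → ℝ} (hδ : ∀ r, δ r ≤ δ' r) :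
    IsFinePartition a b t δ' :=
  { h with
    Icc_subset_closedBall := fun i =>
      (h.Icc_subset_closedBall i).trans (closedBall_subset_closedBall (hδ _)) }

theorem inter (hP : IsFinePartition a b t δ) (hQ : IsFinePartition c d s δ)
    {τ : InterIndex a b c d → ℝ} (hτ : ∀ p, τ p = t p.1.1 ∨ τ p = s p.1.2) :
    IsFinePartition (fun p : InterIndex a b c d => max (a p.1.1) (c p.1.2))
      (fun p => min (b p.1.1) (d p.1.2)) τ δ :=
  { hP.toIsPartition.inter hQ.toIsPartition with
    tag_mem := fun p => by
      rcases hτ p with hp | hp <;> rw [hp]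
      exacts [hP.tag_mem _, hQ.tag_mem _]
    Icc_subset_closedBall := fun p => by
      rcases hτ p with hp | hp <;> rw [hp]
      exacts [(Icc_inter_fst_subset p).trans (hP.Icc_subset_closedBall _),
        (Icc_inter_snd_subset p).trans (hQ.Icc_subset_closedBall _)] }

end IsFinePartition

def IsMcShaneGauge (φ : ℝ → X) (w : X) (ε : ℝ) (δ : ℝ → ℝ) : Prop :=
  ∀ (n : ℕ) (a b t : Fin n → ℝ), IsMcShanePartition n a b t → SubordinateTo n a b t δ →
    ‖w - ∑ i, (b i - a i) • φ (t i)‖ ≤ ε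

theorem IsMcShaneGauge.norm_sub_le [Fintype ι] {φ : ℝ → X} {w : X} {ε : ℝ} {δ : ℝ → ℝ}
    (H : IsMcShaneGauge φ w ε δ) {a b t : ι → ℝ} (hP : IsFinePartition a b t δ) :
    ‖w - ∑ i, (b i - a i) • φ (t i)‖ ≤ ε := by
  let e := (Fintype.equivFin ι).symm
  have hfin : IsMcShanePartition _ (a ∘ e) (b ∘ e) (t ∘ e) :=
    ⟨fun _ => hP.le _, fun _ => hP.tag_mem _,
      (e.surjective.iUnion_comp fun i => Icc (a i) (b i)).trans hP.iUnion_Icc,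
      hP.pairwise_inter.comp_of_injective e.injective⟩
  have hsub : SubordinateTo _ (a ∘ e) (b ∘ e) (t ∘ e) δ := fun k => by
    have := hP.Icc_subset_closedBall (e k)
    rwa [Real.closedBall_eq_Icc, Icc_subset_Icc_iff (hP.le _)] at this
  simpa only [Function.comp, e.sum_comp fun i => (b i - a i) • φ (t i)] using
    H _ _ _ _ hfin hsub

theorem isPartition_grid {M : ℕ} (hM : 0 < M) :
    IsPartition (fun k : Fin M => (k : ℝ) / M) (fun k => ((k : ℝ) + 1) / M) := by
  set f : ℕ → ℝ := fun k => k / M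
  have hf : Monotone f := fun _ _ hkl => by
    simp only [f]; gcongr
  have hsucc : ∀ k : ℕ, f (Order.succ k) = ((k : ℝ) + 1) / M := by simp [f]
  refine ⟨fun k => by gcongr; linarith, ?_, fun k l hkl => ?_⟩
  · refine subset_antisymm (iUnion_subset fun k => Icc_subset_Icc (by positivity) ?_)
      fun x hx => ?_
    · rw [div_le_one (by positivity)]; exact_mod_cast k.2
    rcases hx.1.eq_or_lt with rfl | hx0
    · exact mem_iUnion.2 ⟨⟨0, hM⟩, by simp⟩
    have hx' : x ∈ Ioc (f 0) (f M) := by simpa [f, hM.ne'] using ⟨hx0, hx.2⟩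
    rw [← hf.biUnion_Ico_Ioc_map_succ] at hx'
    obtain ⟨k, hk, hxk⟩ := mem_iUnion₂.1 hx'
    exact mem_iUnion.2 ⟨⟨k, (mem_Ico.1 hk).2⟩, Ioc_subset_Icc_self (hsucc k ▸ hxk)⟩
  · have := hf.pairwise_disjoint_on_Ioo_succ (Fin.val_injective.ne hkl)
    simpa only [Function.onFun, hsucc, disjoint_iff_inter_eq_empty] using this

theorem exists_isFinePartition {δ : ℝ → ℝ} (hδ : ∀ r ∈ Icc (0 : ℝ) 1, 0 < δ r) :
    ∃ (M : ℕ) (a b t : Fin M → ℝ), IsFinePartition a b t δ := by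
  obtain ⟨T, ρ, hρ, hT, hleb⟩ := isCompact_Icc.exists_finset_ball_subset_ball hδ
  obtain ⟨M, hM⟩ := exists_nat_one_div_lt hρ
  have hgrid := isPartition_grid M.succ_pos
  have hmesh : ∀ k : Fin (M + 1), Icc ((k : ℝ) / ↑(M + 1)) (((k : ℝ) + 1) / ↑(M + 1)) ⊆
      ball ((k : ℝ) / ↑(M + 1)) ρ := fun k => by
    rw [Real.ball_eq_Ioo]
    refine Icc_subset_Ioo (by linarith) ?_
    rw [add_div, Nat.cast_succ]; linarith
  choose t htT hball using fun k : Fin (M + 1) =>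
    hleb _ (hgrid.Icc_subset k (left_mem_Icc.2 (hgrid.le k)))
  exact ⟨M + 1, _, _, t, { hgrid with
    tag_mem := fun k => hT (htT k)
    Icc_subset_closedBall := fun k =>
      ((hmesh k).trans (hball k)).trans ball_subset_closedBall }⟩

namespace IsMcShaneGauge

variable {φ : ℝ → X} {w : X} {ε : ℝ} {δ : ℝ → ℝ}

theorem norm_sub_sub_le (H : IsMcShaneGauge φ w ε δ) [Fintype ι] [Fintype κ]
    {a b t : ι → ℝ} {c d s : κ → ℝ} (hP : IsFinePartition a b t δ)
    (hQ : IsFinePartition c d s δ) :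
    ‖∑ i, (b i - a i) • φ (t i) - ∑ j, (d j - c j) • φ (s j)‖ ≤ 2 * ε := by
  have hP' := H.norm_sub_le hP
  have hQ' := H.norm_sub_le hQ
  rw [norm_sub_rev] at hP'
  linarith [norm_sub_le_norm_sub_add_norm_sub (∑ i, (b i - a i) • φ (t i)) w
    (∑ j, (d j - c j) • φ (s j))]

/-- A Saks–Henstock estimate. In the common refinement with a fixed fine partition, retag the
pieces over `S` by the tags of that partition: the Riemann sum moves by at most `2ε`, and `‖φ‖` is
bounded by `C` on those finitely many tags. -/
theorem exists_norm_sum_le (H : IsMcShaneGauge φ w ε δ) (hε : 0 < ε)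
    (hδ : ∀ r ∈ Icc (0 : ℝ) 1, 0 < δ r) :
    ∃ η > 0, ∀ {ι : Type} [Fintype ι] {a b t : ι → ℝ}, IsFinePartition a b t δ →
      ∀ S : Finset ι, ∑ i ∈ S, (b i - a i) ≤ η →
        ‖∑ i ∈ S, (b i - a i) • φ (t i)‖ ≤ 3 * ε := by
  classical
  obtain ⟨M, g, h, τ, hG⟩ := exists_isFinePartition hδ
  set C := ∑ k, ‖φ (τ k)‖
  have hC : 0 ≤ C := Finset.sum_nonneg fun _ _ => norm_nonneg _
  refine ⟨ε / (C + 1), by positivity, fun {ι} _ {a b t} hP S hS => ?_⟩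
  have hR := hP.toIsPartition.inter hG.toIsPartition
  set ℓ : InterIndex a b g h → ℝ := fun p => min (b p.1.1) (h p.1.2) - max (a p.1.1) (g p.1.2)
  set R := ∑ p, ℓ p • (if p.1.1 ∈ S then φ (τ p.1.2) else 0)
  let τ' : InterIndex a b g h → ℝ := fun p => if p.1.1 ∈ S then τ p.1.2 else t p.1.1
  have hdiff : ∑ i ∈ S, (b i - a i) • φ (t i) - R =
      ∑ p, ℓ p • φ (t p.1.1) - ∑ p, ℓ p • φ (τ' p) := by
    rw [← hP.sum_smul_comp_ite hR Icc_inter_fst_subset S (fun i => φ (t i)),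
      ← Finset.sum_sub_distrib, ← Finset.sum_sub_distrib]
    refine Finset.sum_congr rfl fun p _ => ?_
    by_cases hp : p.1.1 ∈ S <;> simp [τ', ℓ, hp]
  have hR_le : ‖R‖ ≤ ε := calc
    ‖R‖ ≤ ∑ p, ℓ p • (if p.1.1 ∈ S then C else 0) := by
      refine norm_sum_le_of_le _ fun p _ => ?_
      have hℓ : 0 ≤ ℓ p := sub_nonneg.2 (hR.le p)
      rw [norm_smul, Real.norm_of_nonneg hℓ, smul_eq_mul]
      gcongr
      split_ifs
      exacts [Finset.single_le_sum (fun k _ => norm_nonneg (φ (τ k))) (Finset.mem_univ _),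
        norm_zero.le]
    _ = C * ∑ i ∈ S, (b i - a i) := by
      rw [hP.sum_smul_comp_ite hR Icc_inter_fst_subset S fun _ => C, Finset.mul_sum]
      simp only [smul_eq_mul, mul_comm]
    _ ≤ C * (ε / (C + 1)) := by gcongr
    _ ≤ ε := by
      rw [mul_div_assoc', div_le_iff₀ (by positivity)]; nlinarith
  have h2ε := H.norm_sub_sub_le (hP.inter hG (τ := fun p => t p.1.1) fun _ => Or.inl rfl)
    (hP.inter hG (τ := τ') fun p => by by_cases hp : p.1.1 ∈ S <;> simp [τ', hp])
  calc ‖∑ i ∈ S, (b i - a i) • φ (t i)‖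
      = ‖(∑ i ∈ S, (b i - a i) • φ (t i) - R) + R‖ := by rw [sub_add_cancel]
    _ ≤ 2 * ε + ε := (norm_add_le _ _).trans (add_le_add (hdiff ▸ h2ε) hR_le)
    _ = 3 * ε := by ring

end IsMcShaneGauge

def IsCauchyGauge (ψ : ℝ → X) (ε : ℝ) (δ : ℝ → ℝ) : Prop :=
  ∀ {ι κ : Type} [Fintype ι] [Fintype κ] {a b t : ι → ℝ} {c d s : κ → ℝ},
    IsFinePartition a b t δ → IsFinePartition c d s δ →
      ‖∑ i, (b i - a i) • ψ (t i) - ∑ j, (d j - c j) • ψ (s j)‖ ≤ ε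

theorem exists_hasMcShaneIntegral_of_isCauchyGauge [CompleteSpace X] {ψ : ℝ → X}
    (h : ∀ ε > 0, ∃ δ : ℝ → ℝ, (∀ r ∈ Icc (0 : ℝ) 1, 0 < δ r) ∧ IsCauchyGauge ψ ε δ) :
    ∃ w, HasMcShaneIntegral ψ w := by
  choose δ hδpos hδ using fun k : ℕ => h (1 / ((k : ℝ) + 1)) Nat.one_div_pos_of_nat
  let Δ : ℕ → ℝ → ℝ := fun k r =>
    (Finset.range (k + 1)).inf' Finset.nonempty_range_add_one fun j => δ j r
  have hΔle {j k : ℕ} (hjk : j ≤ k) (r : ℝ) : Δ k r ≤ δ j r :=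
    Finset.inf'_le _ (Finset.mem_range.2 (Nat.lt_succ_of_le hjk))
  have hΔpos (k : ℕ) (r : ℝ) (hr : r ∈ Icc (0 : ℝ) 1) : 0 < Δ k r :=
    (Finset.lt_inf'_iff _).2 fun j _ => hδpos j r hr
  choose n a b t hP using fun k => exists_isFinePartition (hΔpos k)
  set x : ℕ → X := fun k => ∑ i, (b k i - a k i) • ψ (t k i)
  have hclose {j k : ℕ} (hjk : j ≤ k) {m : ℕ} {a' b' t' : Fin m → ℝ}
      (hP' : IsFinePartition a' b' t' (δ j)) :
      ‖∑ i, (b' i - a' i) • ψ (t' i) - x k‖ ≤ 1 / ((j : ℝ) + 1) :=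
    hδ j hP' ((hP k).mono (hΔle hjk))
  have hx : CauchySeq x := cauchySeq_of_le_tendsto_0 _
    (fun k l j hk hl => (dist_eq_norm _ _).trans_le (hclose hl ((hP k).mono (hΔle hk))))
    tendsto_one_div_add_atTop_nhds_zero_nat
  obtain ⟨w, hw⟩ := cauchySeq_tendsto_of_complete hx
  refine ⟨w, fun ε hε => ?_⟩
  obtain ⟨k, hk⟩ := exists_nat_one_div_lt hε
  refine ⟨δ k, hδpos k, fun m a' b' t' hP' hs' => ?_⟩
  have hlim := le_of_tendsto (tendsto_const_nhds.sub hw).norm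
    (eventually_atTop.2 ⟨k, fun l hl => hclose hl (IsFinePartition.of_fin hP' hs')⟩)
  rw [norm_sub_rev]
  exact hlim.trans hk.le

theorem exists_isCauchyGauge_indicator {φ : ℝ → X} {w : X} (hw : HasMcShaneIntegral φ w)
    {E : Set ℝ} (hE : MeasurableSet E) (hE' : volume E ≠ ⊤) {ε : ℝ} (hε : 0 < ε) :
    ∃ δ : ℝ → ℝ, (∀ r ∈ Icc (0 : ℝ) 1, 0 < δ r) ∧ IsCauchyGauge (E.indicator φ) (8 * ε) δ := by
  classical
  obtain ⟨δ, hδ, H⟩ : ∃ δ, (∀ r ∈ Icc (0 : ℝ) 1, 0 < δ r) ∧ IsMcShaneGauge φ w ε δ := hw ε hε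
  obtain ⟨η, hη, hsmall⟩ := H.exists_norm_sum_le hε hδ
  obtain ⟨K, U, hKE, hEU, hK, hU, hUK⟩ :=
    hE.exists_isCompact_isOpen_sdiff_lt hE' (ENNReal.ofReal_pos.2 hη).ne'
  obtain ⟨γ, hγ, hγU, hγK⟩ :=
    exists_pos_closedBall_subset_of_mem_of_notMem hU hK.isClosed hEU hKE
  refine ⟨fun r => min (δ r) (γ r), fun r hr => lt_min (hδ r hr) (hγ r),
    fun {ι κ} _ _ {a b t c d s} hP hQ => ?_⟩
  have hR := hP.toIsPartition.inter hQ.toIsPartition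
  rw [hP.toIsPartition.sum_indicator_sub_sum_indicator hQ.toIsPartition]
  have hPδ := hP.mono fun r => min_le_left _ _
  have hQδ := hQ.mono fun r => min_le_left _ _
  have hPγ := hP.mono fun r => min_le_right _ _
  have hQγ := hQ.mono fun r => min_le_right _ _
  have hmixed {r r' x : ℝ} (hr : r ∈ E) (hr' : r' ∉ E) (hx : x ∈ closedBall r (γ r))
      (hx' : x ∈ closedBall r' (γ r')) : x ∈ U \ K :=
    ⟨hγU r hr hx, hγK r' hr' hx'⟩
  have hshort {S : Finset (InterIndex a b c d)}
      (hS : ∀ p ∈ S, Icc (max (a p.1.1) (c p.1.2)) (min (b p.1.1) (d p.1.2)) ⊆ U \ K) :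
      ∑ p ∈ S, (min (b p.1.1) (d p.1.2) - max (a p.1.1) (c p.1.2)) ≤ η :=
    (ENNReal.ofReal_le_ofReal_iff hη.le).1 ((hR.ofReal_sum_le_volume hS).trans hUK.le)
  have hS₁ := hsmall (hPδ.inter hQδ (τ := fun p => t p.1.1) fun _ => Or.inl rfl)
    {p | t p.1.1 ∈ E ∧ s p.1.2 ∉ E} <|
    hshort fun p hp x hx => hmixed (Finset.mem_filter.1 hp).2.1 (Finset.mem_filter.1 hp).2.2
      (hPγ.Icc_subset_closedBall _ (Icc_inter_fst_subset p hx))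
      (hQγ.Icc_subset_closedBall _ (Icc_inter_snd_subset p hx))
  have hS₂ := hsmall (hPδ.inter hQδ (τ := fun p => s p.1.2) fun _ => Or.inr rfl)
    {p | t p.1.1 ∉ E ∧ s p.1.2 ∈ E} <|
    hshort fun p hp x hx => hmixed (Finset.mem_filter.1 hp).2.2 (Finset.mem_filter.1 hp).2.1
      (hQγ.Icc_subset_closedBall _ (Icc_inter_snd_subset p hx))
      (hPγ.Icc_subset_closedBall _ (Icc_inter_fst_subset p hx))
  have hmain := H.norm_sub_sub_le (hPδ.inter hQδ (τ := fun p => t p.1.1) fun _ => Or.inl rfl)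
    (hPδ.inter hQδ (τ := fun p => if t p.1.1 ∈ E ∧ s p.1.2 ∈ E then s p.1.2 else t p.1.1)
      fun p => by by_cases hp : t p.1.1 ∈ E ∧ s p.1.2 ∈ E <;> simp [hp])
  calc _ ≤ 2 * ε + 3 * ε + 3 * ε :=
        (norm_sub_le _ _).trans (add_le_add ((norm_add_le _ _).trans (add_le_add hmain hS₁)) hS₂)
    _ = 8 * ε := by ring

end McShane

/-- 2E: if `φ : [0,1] → X` is McShane integrable and `E ⊆ [0,1]` is Lebesgue measurable,
then `φ·χ(E)` is McShane integrable. -/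
theorem stmt3 {X : Type*} [NormedAddCommGroup X] [NormedSpace ℝ X] [CompleteSpace X]
    (φ : ℝ → X) (w : X) (hw : HasMcShaneIntegral φ w)
    (E : Set ℝ) (hE : MeasurableSet E) (hE1 : E ⊆ Set.Icc (0:ℝ) 1) :
    ∃ w' : X, HasMcShaneIntegral (E.indicator φ) w' := by
  have hE' : volume E ≠ ⊤ := ((measure_mono hE1).trans_lt (by simp)).ne
  refine McShane.exists_hasMcShaneIntegral_of_isCauchyGauge fun ε hε => ?_
  obtain ⟨δ, hδ, H⟩ := McShane.exists_isCauchyGauge_indicator hw hE hE' (by positivity : 0 < ε / 8)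
  exact ⟨δ, hδ, fun hP hQ => (H hP hQ).trans_eq (by ring)⟩
end

section
/- Let X be a real Banach space. If φ : [0,1] → X is McShane integrable with McShane integral w, then ‖w‖ ≤ ∫̲ ‖φ(t)‖ μ(dt), the lower Lebesgue integral of the function t ↦ ‖φ(t)‖ on [0,1]. -/
open MeasureTheory Filter Set

/-!
Pair `w` with a functional `f` of norm at most one with `f w = ‖w‖`; it then suffices to bound
the McShane integral `c` of the real function `g = f ∘ φ` by `∫⁻ g⁺`.
Fix `ε` and the McShane gauge `δ` of `g`. The function
`h u = inf {g⁺ s | s ∈ [0,1], |u - s| < δ s}` is upper semicontinuous, hence measurable, and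
`h ≤ g⁺` on `[0,1]`, so `∫ h ≤ ∫⁻ g⁺`. Lebesgue integrable functions are McShane integrable, so
there is a partition with tags `uᵢ` whose Riemann sum for `h` is `ε`-close to `∫ h`, fine enough
that replacing each `uᵢ` by a point `tᵢ` with `|uᵢ - tᵢ| < δ tᵢ` and `g tᵢ ≤ h uᵢ + ε` gives a
partition subordinate to `δ`. Then `c ≤ ∑ |Iᵢ| g tᵢ + ε ≤ ∑ |Iᵢ| h uᵢ + 2ε ≤ ∫ h + 3ε`.
-/

open scoped ENNReal
open BoxIntegral

section McShane

variable {X Y : Type*} [NormedAddCommGroup X] [NormedSpace ℝ X]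
  [NormedAddCommGroup Y] [NormedSpace ℝ Y]

theorem HasMcShaneIntegral.mapL {φ : ℝ → X} {w : X} (hφ : HasMcShaneIntegral φ w)
    (f : X →L[ℝ] Y) : HasMcShaneIntegral (fun t => f (φ t)) (f w) := by
  intro ε hε
  obtain ⟨δ, hδ, hsum⟩ := hφ (ε / (‖f‖ + 1)) (by positivity)
  refine ⟨δ, hδ, fun n a b t hP hsub => ?_⟩
  calc ‖f w - ∑ i, (b i - a i) • f (φ (t i))‖
      = ‖f (w - ∑ i, (b i - a i) • φ (t i))‖ := by simp only [map_sub, map_sum, map_smul]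
    _ ≤ ‖f‖ * (ε / (‖f‖ + 1)) := f.le_opNorm_of_le (hsum n a b t hP hsub)
    _ ≤ ε := by
      rw [← mul_div_assoc, div_le_iff₀ (by positivity)]
      nlinarith [norm_nonneg f]

theorem IsMcShanePartition.sum_sub_eq_one {n : ℕ} {a b t : Fin n → ℝ}
    (hP : IsMcShanePartition n a b t) : ∑ i, (b i - a i) = 1 := by
  obtain ⟨hab, -, hcover, hdisj⟩ := hP
  have hvol : volume (⋃ i, Icc (a i) (b i)) = ∑ i, volume (Icc (a i) (b i)) := by
    rw [measure_iUnion₀ _ fun i => measurableSet_Icc.nullMeasurableSet, tsum_fintype]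
    intro i j hij
    exact (disjoint_iff_inter_eq_empty.2 (hdisj hij)).aedisjoint.congr
      Ioo_ae_eq_Icc.symm Ioo_ae_eq_Icc.symm
  rw [hcover] at hvol
  simp only [Real.volume_Icc, sub_zero] at hvol
  rw [← ENNReal.ofReal_sum_of_nonneg fun i _ => sub_nonneg.2 (hab i)] at hvol
  exact ((ENNReal.ofReal_eq_ofReal_iff
    (Finset.sum_nonneg fun i _ => sub_nonneg.2 (hab i)) zero_le_one).1 hvol.symm)

theorem IsMcShanePartition.retag {n : ℕ} {a b u t : Fin n → ℝ}
    (hP : IsMcShanePartition n a b u) (ht : ∀ i, t i ∈ Icc (0:ℝ) 1) :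
    IsMcShanePartition n a b t :=
  ⟨hP.1, ht, hP.2.2⟩

theorem SubordinateTo.retag {n : ℕ} {a b u t : Fin n → ℝ} {ρ δ : ℝ → ℝ}
    (hsub : SubordinateTo n a b u ρ) (ht : ∀ i, ρ (u i) ≤ δ (t i) - |u i - t i|) :
    SubordinateTo n a b t δ := by
  intro i
  have := hsub i
  have := ht i
  constructor <;> linarith [le_abs_self (u i - t i), neg_abs_le (u i - t i)]

end McShane

section GaugeMinorant

variable {α : Type*} [PseudoMetricSpace α]

noncomputable def gaugeMinorant (S : Set α) (G : α → ℝ≥0∞) (δ : α → ℝ) (u : α) : ℝ≥0∞ :=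
  ⨅ s ∈ S, ⨅ (_ : u ∈ Metric.ball s (δ s)), G s

variable (S : Set α) (G : α → ℝ≥0∞) (δ : α → ℝ)

theorem upperSemicontinuous_gaugeMinorant : UpperSemicontinuous (gaugeMinorant S G δ) := by
  refine upperSemicontinuous_iff_isOpen_preimage.2 fun y => ?_
  have : gaugeMinorant S G δ ⁻¹' Iio y = ⋃ s ∈ S, ⋃ (_ : G s < y), Metric.ball s (δ s) := by
    ext u
    simp only [gaugeMinorant, mem_preimage, mem_Iio, iInf_lt_iff, mem_iUnion]
    tauto
  rw [this]
  exact isOpen_biUnion fun s _ => isOpen_iUnion fun _ => Metric.isOpen_ball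

variable {S G δ}

theorem gaugeMinorant_le {u : α} (hu : u ∈ S) (hδ : 0 < δ u) : gaugeMinorant S G δ u ≤ G u :=
  iInf₂_le_of_le u hu (iInf_le_of_le (Metric.mem_ball_self hδ) le_rfl)

theorem exists_lt_gaugeMinorant_add {u : α} {ε : ℝ≥0∞} (hu : gaugeMinorant S G δ u ≠ ⊤)
    (hε : ε ≠ 0) : ∃ s ∈ S, u ∈ Metric.ball s (δ s) ∧ G s < gaugeMinorant S G δ u + ε := by
  have := ENNReal.lt_add_right hu hε
  conv_lhs at this => rw [gaugeMinorant]
  simpa only [iInf_lt_iff, exists_prop] using this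

end GaugeMinorant

section UnitBox

def unitBox : Box (Fin 1) := ⟨0, 1, fun _ => zero_lt_one⟩

theorem coe_unitBox :
    (unitBox : Set (Fin 1 → ℝ)) = MeasurableEquiv.funUnique (Fin 1) ℝ ⁻¹' Ioc 0 1 := by
  ext x
  simp [Box.mem_coe, Box.mem_def, unitBox, Fin.forall_fin_one]

theorem hasIntegral_unitBox {E : Type*} [NormedAddCommGroup E] [NormedSpace ℝ E] [CompleteSpace E]
    {h : ℝ → E} (hh : IntegrableOn h (Icc 0 1)) :
    HasIntegral unitBox IntegrationParams.McShane (fun x => h (x 0))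
      (volume : Measure (Fin 1 → ℝ)).toBoxAdditive.toSMul (∫ x in Icc 0 1, h x) := by
  have he := volume_preserving_funUnique (Fin 1) ℝ
  have hemb := (MeasurableEquiv.funUnique (Fin 1) ℝ).measurableEmbedding
  rw [integral_Icc_eq_integral_Ioc, ← he.setIntegral_preimage_emb hemb, ← coe_unitBox]
  refine IntegrableOn.hasBoxIntegral ?_ _ rfl
  rw [coe_unitBox]
  exact (he.integrableOn_comp_preimage hemb).2 (hh.mono_set Ioc_subset_Icc_self)

end UnitBox

namespace BoxIntegral.TaggedPrepartition

variable {I : Box (Fin 1)} (π : TaggedPrepartition I)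

noncomputable def boxAt (i : Fin π.boxes.card) : Box (Fin 1) := π.boxes.equivFin.symm i

theorem boxAt_mem (i : Fin π.boxes.card) : π.boxAt i ∈ π := (π.boxes.equivFin.symm i).2

theorem boxAt_injective : Function.Injective π.boxAt :=
  Subtype.val_injective.comp π.boxes.equivFin.symm.injective

theorem exists_boxAt_eq {J : Box (Fin 1)} (hJ : J ∈ π) : ∃ i, π.boxAt i = J :=
  ⟨π.boxes.equivFin ⟨J, hJ⟩, by simp [boxAt]⟩

theorem sum_boxes_eq_sum_boxAt {M : Type*} [AddCommMonoid M] (F : Box (Fin 1) → M) :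
    ∑ J ∈ π.boxes, F J = ∑ i, F (π.boxAt i) := by
  rw [← Finset.sum_coe_sort π.boxes F]
  exact (Equiv.sum_comp π.boxes.equivFin.symm fun J : π.boxes => F J).symm

theorem mem_Icc_boxAt {i : Fin π.boxes.card} {x : ℝ}
    (hx : x ∈ Icc ((π.boxAt i).lower 0) ((π.boxAt i).upper 0)) :
    (fun _ => x) ∈ Box.Icc (π.boxAt i) := by
  simpa [Box.Icc_def, Pi.le_def, Fin.forall_fin_one] using hx

theorem subordinateTo_of_isSubordinate {r : (Fin 1 → ℝ) → Ioi (0:ℝ)} (hr : π.IsSubordinate r)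
    {ρ : ℝ → ℝ} (hρ : ∀ i, (r (π.tag (π.boxAt i)) : ℝ) ≤ ρ (π.tag (π.boxAt i) 0)) :
    SubordinateTo π.boxes.card (fun i => (π.boxAt i).lower 0) (fun i => (π.boxAt i).upper 0)
      (fun i => π.tag (π.boxAt i) 0) ρ := by
  have hdist : ∀ i, ∀ x ∈ Icc ((π.boxAt i).lower 0) ((π.boxAt i).upper 0),
      |x - π.tag (π.boxAt i) 0| ≤ ρ (π.tag (π.boxAt i) 0) := fun i x hx => by
    have hball := Metric.mem_closedBall.1 (hr _ (π.boxAt_mem i) (π.mem_Icc_boxAt hx))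
    have := (dist_le_pi_dist (fun _ => x) (π.tag (π.boxAt i)) 0).trans (hball.trans (hρ i))
    rwa [Real.dist_eq] at this
  intro i
  have hab := ((π.boxAt i).lower_lt_upper 0).le
  have ha := abs_le.1 (hdist i _ ⟨le_rfl, hab⟩)
  have hb := abs_le.1 (hdist i _ ⟨hab, le_rfl⟩)
  constructor <;> linarith [ha.1, hb.2]

theorem integralSum_comp_eval_zero {E : Type*} [NormedAddCommGroup E] [NormedSpace ℝ E]
    (h : ℝ → E) :
    integralSum (fun x => h (x 0)) (volume : Measure (Fin 1 → ℝ)).toBoxAdditive.toSMul π =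
      ∑ i, ((π.boxAt i).upper 0 - (π.boxAt i).lower 0) • h (π.tag (π.boxAt i) 0) := by
  rw [integralSum, π.sum_boxes_eq_sum_boxAt]
  simp only [BoxAdditiveMap.toSMul_apply, Box.volume_apply, Fin.prod_univ_one]

theorem isMcShanePartition {π : TaggedPrepartition unitBox} (hπ : π.IsPartition) :
    IsMcShanePartition π.boxes.card (fun i => (π.boxAt i).lower 0) (fun i => (π.boxAt i).upper 0)
      (fun i => π.tag (π.boxAt i) 0) := by
  refine ⟨fun i => ((π.boxAt i).lower_lt_upper 0).le, fun i => ?_, ?_, ?_⟩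
  · have := π.tag_mem_Icc (π.boxAt i)
    exact ⟨this.1 0, this.2 0⟩
  · refine (Set.iUnion_subset fun i => ?_).antisymm ?_
    · have hle := (Box.le_iff_bounds.1 (π.le_of_mem (π.boxAt_mem i)))
      exact Icc_subset_Icc (hle.1 0) (hle.2 0)
    · have hcover : Ioc (0:ℝ) 1 ⊆ ⋃ i, Icc ((π.boxAt i).lower 0) ((π.boxAt i).upper 0) := by
        intro x hx
        obtain ⟨J, hJ, hxJ⟩ := hπ (fun _ => x) (by simpa [Box.mem_def, unitBox] using hx)
        obtain ⟨i, rfl⟩ := π.exists_boxAt_eq hJ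
        exact Set.mem_iUnion.2 ⟨i, Ioc_subset_Icc_self (hxJ 0)⟩
      simpa [closure_Ioc zero_ne_one, (isClosed_iUnion_of_finite fun i => isClosed_Icc).closure_eq]
        using closure_mono hcover
  · intro i j hij
    refine eq_empty_of_forall_notMem fun x ⟨hxi, hxj⟩ => ?_
    have hmem : ∀ k, x ∈ Ioo ((π.boxAt k).lower 0) ((π.boxAt k).upper 0) →
        (fun _ => x) ∈ (π.boxAt k : Set (Fin 1 → ℝ)) := fun k hx => by
      simpa [Box.mem_coe, Box.mem_def, Fin.forall_fin_one] using Ioo_subset_Ioc_self hx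
    exact disjoint_left.1 (π.disjoint_coe_of_mem (π.boxAt_mem i) (π.boxAt_mem j)
      (π.boxAt_injective.ne hij)) (hmem i hxi) (hmem j hxj)

end BoxIntegral.TaggedPrepartition

theorem exists_isMcShanePartition_norm_riemannSum_sub_integral_le {E : Type*}
    [NormedAddCommGroup E] [NormedSpace ℝ E] [CompleteSpace E] {h : ℝ → E}
    (hh : IntegrableOn h (Icc 0 1)) {ρ : ℝ → ℝ} (hρ : ∀ x ∈ Icc (0:ℝ) 1, 0 < ρ x) {ε : ℝ}
    (hε : 0 < ε) :
    ∃ (n : ℕ) (a b u : Fin n → ℝ), IsMcShanePartition n a b u ∧ SubordinateTo n a b u ρ ∧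
      ‖∑ i, (b i - a i) • h (u i) - ∫ x in Icc 0 1, h x‖ ≤ ε := by
  obtain ⟨r, -, hr⟩ := hasIntegral_iff.1 (hasIntegral_unitBox hh) ε hε
  let R : (Fin 1 → ℝ) → Ioi (0:ℝ) := fun x =>
    if hx : x 0 ∈ Icc (0:ℝ) 1 then ⟨min (r 0 x) (ρ (x 0)), lt_min (r 0 x).2 (hρ _ hx)⟩
    else r 0 x
  have hRr : ∀ x, (R x : ℝ) ≤ r 0 x := fun x => by
    unfold R; split_ifs
    exacts [min_le_left _ _, le_rfl]
  have hRρ : ∀ x ∈ Box.Icc unitBox, (R x : ℝ) ≤ ρ (x 0) := fun x hx => by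
    have hx0 : x 0 ∈ Icc (0:ℝ) 1 := ⟨hx.1 0, hx.2 0⟩
    simp only [R, hx0, dif_pos]
    exact min_le_right _ _
  obtain ⟨π, hπ, -, hπR, -⟩ :=
    Box.exists_taggedPartition_isHenstock_isSubordinate_homothetic unitBox R
  have hmem : IntegrationParams.McShane.MemBaseSet unitBox 0 (r 0) π :=
    ⟨hπR.mono fun x _ => hRr x, by simp [IntegrationParams.McShane],
      by simp [IntegrationParams.McShane], by simp [IntegrationParams.McShane]⟩
  refine ⟨_, _, _, _, π.isMcShanePartition hπ,
    π.subordinateTo_of_isSubordinate hπR fun i => hRρ _ (π.tag_mem_Icc _), ?_⟩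
  rw [← π.integralSum_comp_eval_zero, ← dist_eq_norm]
  exact hr 0 π hmem hπ

theorem HasMcShaneIntegral.le_toReal_lintegral_add {g : ℝ → ℝ} {c : ℝ}
    (hg : HasMcShaneIntegral g c) (hL : ∫⁻ t in Icc 0 1, ENNReal.ofReal (g t) ≠ ⊤) {ε : ℝ}
    (hε : 0 < ε) : c ≤ (∫⁻ t in Icc 0 1, ENNReal.ofReal (g t)).toReal + 3 * ε := by
  obtain ⟨δ, hδ, hsum⟩ := hg ε hε
  set L := ∫⁻ t in Icc 0 1, ENNReal.ofReal (g t)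
  set h := gaugeMinorant (Icc 0 1) (fun t => ENNReal.ofReal (g t)) δ
  have h_le : ∀ u ∈ Icc (0:ℝ) 1, h u ≤ ENNReal.ofReal (g u) :=
    fun u hu => gaugeMinorant_le hu (hδ u hu)
  have h_lint : ∫⁻ u in Icc 0 1, h u ≤ L := setLIntegral_mono' measurableSet_Icc h_le
  have h_meas : Measurable h := (upperSemicontinuous_gaugeMinorant _ _ _).measurable
  have h_int : IntegrableOn (fun u => (h u).toReal) (Icc 0 1) :=
    integrable_toReal_of_lintegral_ne_top h_meas.aemeasurable (ne_top_of_le_ne_top hL h_lint)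
  have h_integral : ∫ u in Icc 0 1, (h u).toReal ≤ L.toReal := by
    rw [integral_toReal h_meas.aemeasurable
      ((ae_restrict_iff' measurableSet_Icc).2 (ae_of_all _ fun u hu =>
        (h_le u hu).trans_lt ENNReal.ofReal_lt_top))]
    exact ENNReal.toReal_mono hL h_lint
  have h_retag : ∀ u ∈ Icc (0:ℝ) 1, ∃ t ∈ Icc (0:ℝ) 1, |u - t| < δ t ∧ g t ≤ (h u).toReal + ε := by
    intro u hu
    have hfin : h u ≠ ⊤ := ne_top_of_le_ne_top ENNReal.ofReal_ne_top (h_le u hu)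
    obtain ⟨t, ht, hut, hlt⟩ :=
      exists_lt_gaugeMinorant_add hfin (ENNReal.ofReal_pos.2 hε).ne'
    refine ⟨t, ht, by rwa [Metric.mem_ball, Real.dist_eq] at hut, ?_⟩
    have := ENNReal.toReal_mono (by finiteness) hlt.le
    rw [ENNReal.toReal_add hfin ENNReal.ofReal_ne_top, ENNReal.toReal_ofReal hε.le,
      ENNReal.toReal_ofReal'] at this
    exact (le_max_left _ _).trans this
  choose! sel hsel_mem hsel_near hsel_le using h_retag
  obtain ⟨n, a, b, u, hP, hsub, hR⟩ := exists_isMcShanePartition_norm_riemannSum_sub_integral_le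
    h_int (ρ := fun u => δ (sel u) - |u - sel u|) (fun u hu => sub_pos.2 (hsel_near u hu)) hε
  have hP' := hP.retag fun i => hsel_mem _ (hP.2.1 i)
  have hab : ∀ i, 0 ≤ b i - a i := fun i => sub_nonneg.2 (hP.1 i)
  have hc := hsum n a b (sel ∘ u) hP' (hsub.retag fun i => le_rfl)
  simp only [Function.comp_apply, smul_eq_mul, Real.norm_eq_abs] at hc hR
  have hretag_sum : ∑ i, (b i - a i) * g (sel (u i)) ≤ ∑ i, (b i - a i) * (h (u i)).toReal + ε := by
    calc ∑ i, (b i - a i) * g (sel (u i)) ≤ ∑ i, (b i - a i) * ((h (u i)).toReal + ε) :=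
          Finset.sum_le_sum fun i _ => mul_le_mul_of_nonneg_left (hsel_le _ (hP.2.1 i)) (hab i)
      _ = ∑ i, (b i - a i) * (h (u i)).toReal + ε := by
          simp only [mul_add, Finset.sum_add_distrib, ← Finset.sum_mul, hP.sum_sub_eq_one, one_mul]
  have hc_le := (abs_le.1 hc).2
  have hR_le := (sub_le_sub_left h_integral _).trans (abs_le.1 hR).2
  linarith

theorem HasMcShaneIntegral.ofReal_le_lintegral {g : ℝ → ℝ} {c : ℝ}
    (hg : HasMcShaneIntegral g c) : ENNReal.ofReal c ≤ ∫⁻ t in Icc 0 1, ENNReal.ofReal (g t) := by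
  by_cases hL : ∫⁻ t in Icc 0 1, ENNReal.ofReal (g t) = ⊤
  · exact hL ▸ le_top
  refine ENNReal.ofReal_le_of_le_toReal (le_of_forall_pos_le_add fun ε hε => ?_)
  linarith [hg.le_toReal_lintegral_add hL (ε := ε / 3) (by positivity)]

-- For a non-measurable integrand, `∫⁻` is the supremum over measurable minorants,
-- i.e. the lower integral.
theorem stmt4_general {X : Type*} [NormedAddCommGroup X] [NormedSpace ℝ X]
    (φ : ℝ → X) (w : X) (hw : HasMcShaneIntegral φ w) :
    ENNReal.ofReal ‖w‖ ≤ ∫⁻ t in Set.Icc (0:ℝ) 1, (‖φ t‖₊ : ENNReal) := by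
  obtain ⟨f, hf, hfw⟩ := exists_dual_vector'' ℝ w
  calc ENNReal.ofReal ‖w‖ = ENNReal.ofReal (f w) := by rw [hfw]; rfl
    _ ≤ ∫⁻ t in Icc 0 1, ENNReal.ofReal (f (φ t)) := (hw.mapL f).ofReal_le_lintegral
    _ ≤ ∫⁻ t in Icc 0 1, ‖φ t‖₊ := lintegral_mono fun t => by
      refine (ENNReal.ofReal_le_ofReal ?_).trans_eq (ofReal_norm _)
      exact (Real.le_norm_self _).trans ((f.le_of_opNorm_le hf _).trans_eq (one_mul _))

/-- 2G: if `φ : [0,1] → X` is McShane integrable with integral `w`, then `‖w‖` is at most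
the lower Lebesgue integral of `t ↦ ‖φ t‖` over `[0,1]` (which is `∫⁻`, the supremum of the
integrals of (simple, equivalently integrable) functions below `t ↦ ‖φ t‖`). -/
theorem stmt4 {X : Type*} [NormedAddCommGroup X] [NormedSpace ℝ X] [CompleteSpace X]
    (φ : ℝ → X) (w : X) (hw : HasMcShaneIntegral φ w) :
    ENNReal.ofReal ‖w‖ ≤ ∫⁻ t in Set.Icc (0:ℝ) 1, (‖φ t‖₊ : ENNReal) :=
  stmt4_general φ w hw
end

section
/- Let (S,Σ,μ) be a probability space and B ⊆ ℝ^S a stable set of real-valued functions on S. Suppose that A ⊆ ℝ^S is a countable set of functions such that A \ U is stable whenever U is an open subset of ℝ^S for the topology of pointwise convergence with B ⊆ U. Then A is stable. -/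
open MeasureTheory Filter Set

/-!
Suppose `A` is not stable, as witnessed by `E` and `α < β`, and pick `α < α' < β' < β`. Each
`f ∈ A` lies in `B` or in `A \ {f}ᶜ`, so `{f}` is stable; this makes `E ∩ {f ≤ α}` and
`E ∩ {β ≤ f}` almost contained in measurable sets `F f ⊆ {f < α'}` and `G f ⊆ {β' < f}`.
As `A` is countable, the crossing set of `A` is covered up to a null set by the measurable union
`Y` of the boxes `F fᵏ⁺ᵐ × G fˡ⁺ⁿ`, which therefore fills `Eᵏ⁺ᵐ × Eˡ⁺ⁿ`. Stability of `B` at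
`(α', β')` yields `k, l` for which the crossing set of `B` misses part of `Eᵏ × Eˡ` of positive
measure, and by Fubini some point `q` of that part has full sections of `Y` for all `m, n`. The
functions crossing at `q` form a closed set disjoint from `B`; for its complement `U`, the
sections of `Y` at `q` lie in the crossing set of `A \ U`, contradicting the stability of `A \ U`.
-/

namespace MeasureTheory

section General

variable {α β γ δ : Type*} [MeasurableSpace α] [MeasurableSpace β] [MeasurableSpace γ]
  [MeasurableSpace δ]

theorem measurePreserving_prodProdProdComm (μa : Measure α) (μb : Measure β) (μc : Measure γ)
    (μd : Measure δ) [SFinite μa] [SFinite μb] [SFinite μc] [SFinite μd] :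
    MeasurePreserving (fun p : (α × β) × γ × δ => ((p.1.1, p.2.1), (p.1.2, p.2.2)))
      ((μa.prod μb).prod (μc.prod μd)) ((μa.prod μc).prod (μb.prod μd)) := by
  have hmid : MeasurePreserving (fun p : β × γ × δ => (p.2.1, p.1, p.2.2))
      (μb.prod (μc.prod μd)) (μc.prod (μb.prod μd)) :=
    (measurePreserving_prodAssoc μc μb μd).comp
      (((Measure.measurePreserving_swap (μ := μb) (ν := μc)).prod (MeasurePreserving.id μd)).comp
        (measurePreserving_prodAssoc μb μc μd).symm)
  exact (measurePreserving_prodAssoc μa μc (μb.prod μd)).symm.comp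
    (((MeasurePreserving.id μa).prod hmid).comp (measurePreserving_prodAssoc μa μb (μc.prod μd)))

theorem ae_measure_prodMk_preimage_eq_of_le {μ : Measure α} {ν : Measure β} [IsFiniteMeasure μ]
    [IsFiniteMeasure ν] {s : Set α} {t : Set β} {Y : Set (α × β)} (hs : MeasurableSet s)
    (hY : MeasurableSet Y) (hYst : Y ⊆ s ×ˢ t) (hfull : μ s * ν t ≤ μ.prod ν Y) :
    ∀ᵐ x ∂μ, x ∈ s → ν (Prod.mk x ⁻¹' Y) = ν t := by
  have hle : ∀ x, ν (Prod.mk x ⁻¹' Y) ≤ s.indicator (fun _ => ν t) x := by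
    intro x
    by_cases hx : x ∈ s
    · rw [indicator_of_mem hx]
      exact measure_mono fun y hy => (hYst hy).2
    · rw [indicator_of_notMem hx, nonpos_iff_eq_zero, ← measure_empty (μ := ν)]
      exact congrArg ν (eq_empty_of_forall_notMem fun y hy => hx (hYst hy).1)
  have hint : ∫⁻ x, ν (Prod.mk x ⁻¹' Y) ∂μ = μ.prod ν Y := (Measure.prod_apply hY).symm
  have heq := ae_eq_of_ae_le_of_lintegral_le (ae_of_all μ hle)
    (hint ▸ measure_ne_top _ _) (aemeasurable_const.indicator hs)
    (by rwa [hint, lintegral_indicator_const hs, mul_comm])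
  filter_upwards [heq] with x hx hxs
  rw [hx, indicator_of_mem hxs]

end General

end MeasureTheory

section Crossing

variable {S : Type*}

def crossingFunctions {m n : ℕ} (p : (Fin m → S) × (Fin n → S)) (α β : ℝ) : Set (S → ℝ) :=
  {f | (∀ i, f (p.1 i) ≤ α) ∧ ∀ j, β ≤ f (p.2 j)}

/-- The set `Z(A, E, m, n, α, β)` of the definition of `Stable`. -/
def crossingSet (A : Set (S → ℝ)) (E : Set S) (m n : ℕ) (α β : ℝ) :
    Set ((Fin m → S) × (Fin n → S)) :=
  {p | (∀ i, p.1 i ∈ E) ∧ (∀ j, p.2 j ∈ E) ∧ ∃ f ∈ A, f ∈ crossingFunctions p α β}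

def pairBox (X Y : Set S) (m n : ℕ) : Set ((Fin m → S) × (Fin n → S)) :=
  univ.pi (fun _ => X) ×ˢ univ.pi (fun _ => Y)

def appendPair {k l m n : ℕ} (q : (Fin k → S) × (Fin l → S)) (w : (Fin m → S) × (Fin n → S)) :
    (Fin (k + m) → S) × (Fin (l + n) → S) :=
  (Fin.append q.1 w.1, Fin.append q.2 w.2)

theorem isClosed_crossingFunctions {m n : ℕ} (p : (Fin m → S) × (Fin n → S)) (α β : ℝ) :
    IsClosed (crossingFunctions p α β) := by
  simp only [crossingFunctions, ofPred_and, ofPred_forall]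
  exact (isClosed_iInter fun i => isClosed_le (continuous_apply _) continuous_const).inter
    (isClosed_iInter fun j => isClosed_le continuous_const (continuous_apply _))

theorem crossingSet_mono {A A' : Set (S → ℝ)} (h : A ⊆ A') {E : Set S} {m n : ℕ} {α β : ℝ} :
    crossingSet A E m n α β ⊆ crossingSet A' E m n α β :=
  fun _ ⟨h1, h2, f, hf, hp⟩ => ⟨h1, h2, f, h hf, hp⟩

theorem mem_pairBox {X Y : Set S} {m n : ℕ} {p : (Fin m → S) × (Fin n → S)} :
    p ∈ pairBox X Y m n ↔ (∀ i, p.1 i ∈ X) ∧ ∀ j, p.2 j ∈ Y := by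
  simp [pairBox]

theorem appendPair_mem_pairBox {X Y : Set S} {k l m n : ℕ} {q : (Fin k → S) × (Fin l → S)}
    {w : (Fin m → S) × (Fin n → S)} :
    appendPair q w ∈ pairBox X Y (k + m) (l + n) ↔ q ∈ pairBox X Y k l ∧ w ∈ pairBox X Y m n := by
  simp only [mem_pairBox, appendPair, Fin.forall_fin_add, Fin.append_left, Fin.append_right]
  tauto

theorem setOf_appendPair_mem_subset_crossingSet {A : Set (S → ℝ)} {E : Set S} {α β : ℝ}
    {F G : A → Set S} (hF : ∀ f : A, F f ⊆ E ∩ {x | f.1 x < α})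
    (hG : ∀ f : A, G f ⊆ E ∩ {x | β < f.1 x}) {k l m n : ℕ} (q : (Fin k → S) × (Fin l → S)) :
    {w : (Fin m → S) × (Fin n → S) | appendPair q w ∈ ⋃ f, pairBox (F f) (G f) (k + m) (l + n)}
      ⊆ crossingSet (A ∩ crossingFunctions q α β) E m n α β := by
  intro w hw
  obtain ⟨f, hf⟩ := mem_iUnion.1 hw
  obtain ⟨⟨hq₁, hq₂⟩, hw₁, hw₂⟩ := (appendPair_mem_pairBox.1 hf).imp mem_pairBox.1 mem_pairBox.1
  exact ⟨fun i => (hF f (hw₁ i)).1, fun j => (hG f (hw₂ j)).1, f,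
    ⟨f.2, fun i => (hF f (hq₁ i)).2.le, fun j => (hG f (hq₂ j)).2.le⟩,
    fun i => (hF f (hw₁ i)).2.le, fun j => (hG f (hw₂ j)).2.le⟩

variable [MeasurableSpace S]

noncomputable abbrev prodPi (μ : Measure S) (m n : ℕ) : Measure ((Fin m → S) × (Fin n → S)) :=
  (Measure.pi fun _ : Fin m => μ).prod (Measure.pi fun _ : Fin n => μ)

theorem Stable.mono {μ : Measure S} {A A' : Set (S → ℝ)} (h : Stable μ A') (hA : A ⊆ A') :
    Stable μ A := fun E hE hμE α β hαβ =>
  let ⟨m, n, hm, hn, hlt⟩ := h E hE hμE α β hαβ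
  ⟨m, n, hm, hn, (measure_mono (crossingSet_mono hA)).trans_lt hlt⟩

theorem MeasurableSet.pairBox {X Y : Set S} (hX : MeasurableSet X) (hY : MeasurableSet Y)
    (m n : ℕ) : MeasurableSet (pairBox X Y m n) :=
  (MeasurableSet.univ_pi fun _ => hX).prod (MeasurableSet.univ_pi fun _ => hY)

theorem prodPi_pairBox (μ : Measure S) [SigmaFinite μ] (X Y : Set S) (m n : ℕ) :
    prodPi μ m n (pairBox X Y m n) = μ X ^ m * μ Y ^ n := by
  simp [pairBox, Measure.prod_prod, Measure.pi_pi]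

theorem measurePreserving_finAppend (μ : Measure S) [SigmaFinite μ] (a b : ℕ) :
    MeasurePreserving (fun p : (Fin a → S) × (Fin b → S) => Fin.append p.1 p.2)
      ((Measure.pi fun _ : Fin a => μ).prod (Measure.pi fun _ : Fin b => μ))
      (Measure.pi fun _ : Fin (a + b) => μ) := by
  convert (measurePreserving_piCongrLeft (fun _ => μ) finSumFinEquiv).comp
    (measurePreserving_sumPiEquivProdPi_symm (X := fun _ : Fin a ⊕ Fin b => S) fun _ => μ) using 1
  funext p i
  refine Fin.addCases (fun i => ?_) (fun i => ?_) i <;>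
    simp [MeasurableEquiv.piCongrLeft, Equiv.piCongrLeft,
      MeasurableEquiv.coe_sumPiEquivProdPi_symm]

theorem measurePreserving_appendPair (μ : Measure S) [SigmaFinite μ] (k l m n : ℕ) :
    MeasurePreserving (Function.uncurry (appendPair (k := k) (l := l) (m := m) (n := n)))
      ((prodPi μ k l).prod (prodPi μ m n)) (prodPi μ (k + m) (l + n)) :=
  ((measurePreserving_finAppend μ k m).prod (measurePreserving_finAppend μ l n)).comp
    (measurePreserving_prodProdProdComm _ _ _ _)

theorem exists_mem_pairBox_notMem_forall_measure_appendPair_eq {μ : Measure S} [IsFiniteMeasure μ]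
    {E : Set S} (hE : MeasurableSet E) {k l : ℕ} {W : Set ((Fin k → S) × (Fin l → S))}
    (hW : prodPi μ k l W < μ E ^ (k + l))
    (Y : ∀ m n : ℕ, Set ((Fin (k + m) → S) × (Fin (l + n) → S)))
    (hYm : ∀ m n, MeasurableSet (Y m n)) (hYE : ∀ m n, Y m n ⊆ pairBox E E (k + m) (l + n))
    (hYfull : ∀ m n, μ E ^ ((k + m) + (l + n)) ≤ prodPi μ (k + m) (l + n) (Y m n)) :
    ∃ q ∈ pairBox E E k l, q ∉ W ∧
      ∀ m n, prodPi μ m n {w | appendPair q w ∈ Y m n} = μ E ^ (m + n) := by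
  have hsec : ∀ m n, ∀ᵐ q ∂prodPi μ k l, q ∈ pairBox E E k l →
      prodPi μ m n {w | appendPair q w ∈ Y m n} = μ E ^ (m + n) := by
    intro m n
    have hθ := measurePreserving_appendPair μ k l m n
    have h := ae_measure_prodMk_preimage_eq_of_le (μ := prodPi μ k l) (ν := prodPi μ m n)
      (hE.pairBox hE k l) (hθ.measurable (hYm m n))
      (fun p hp => appendPair_mem_pairBox.1 (hYE m n hp)) ?_
    · filter_upwards [h] with q hq hqE
      exact (hq hqE).trans (by rw [prodPi_pairBox, pow_add])
    · rw [hθ.measure_preimage (hYm m n).nullMeasurableSet, prodPi_pairBox, prodPi_pairBox,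
        ← pow_add, ← pow_add, ← pow_add]
      convert hYfull m n using 2
      ring
  have hall : ∀ᵐ q ∂prodPi μ k l, q ∈ pairBox E E k l →
      ∀ m n, prodPi μ m n {w | appendPair q w ∈ Y m n} = μ E ^ (m + n) := by
    filter_upwards [ae_all_iff.2 fun m => ae_all_iff.2 (hsec m)] with q hq hqE m n
    exact hq m n hqE
  by_contra! hbad
  refine hW.not_ge ?_
  calc μ E ^ (k + l) = prodPi μ k l (pairBox E E k l) := by rw [prodPi_pairBox, pow_add]
    _ ≤ prodPi μ k l W := measure_mono_ae <| hall.mono fun q hq hqE => by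
        by_contra hqW
        obtain ⟨m, n, hmn⟩ := hbad q hqE hqW
        exact hmn (hq hqE m n)

end Crossing

section Stability

variable {S : Type*} [MeasurableSpace S] {μ : Measure S}

theorem exists_measurableSet_subset_diff_of_null {E s t : Set S} (hE : MeasurableSet E)
    (hs : s ⊆ E) (hst : μ (E ∩ toMeasurable μ s ∩ toMeasurable μ t) = 0) :
    ∃ F, MeasurableSet F ∧ F ⊆ E \ t ∧ μ (s \ F) = 0 := by
  refine ⟨(E ∩ toMeasurable μ s) \ toMeasurable μ t,
    (hE.inter (measurableSet_toMeasurable _ _)).diff (measurableSet_toMeasurable _ _),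
    fun x hx => ⟨hx.1.1, fun hxt => hx.2 (subset_toMeasurable _ _ hxt)⟩,
    measure_mono_null (fun x hx => ?_) hst⟩
  have hxs : x ∈ E ∩ toMeasurable μ s := ⟨hs hx.1, subset_toMeasurable _ _ hx.1⟩
  exact ⟨hxs, not_not.1 fun hxt => hx.2 ⟨hxs, hxt⟩⟩

theorem measure_inter_eq_of_subset_toMeasurable [SFinite μ] {s t : Set S} (ht : MeasurableSet t)
    (hts : t ⊆ toMeasurable μ s) : μ (s ∩ t) = μ t := by
  rw [← Measure.measure_toMeasurable_inter_of_sFinite ht, inter_eq_right.2 hts]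

variable [SigmaFinite μ] {f : S → ℝ} {E : Set S} {c c' : ℝ}

theorem Stable.measure_eq_zero_of_levelSets_full (hf : Stable μ {f}) (hE : MeasurableSet E)
    (hc : c < c') (hlow : μ (E ∩ {x | f x ≤ c}) = μ E) (hhigh : μ (E ∩ {x | c' ≤ f x}) = μ E) :
    μ E = 0 := by
  by_contra h0
  obtain ⟨m, n, -, -, hlt⟩ := hf E hE (pos_iff_ne_zero.2 h0) c c' hc
  refine hlt.not_ge ?_
  calc μ E ^ (m + n)
      = prodPi μ m n (pairBox (E ∩ {x | f x ≤ c}) (E ∩ {x | c' ≤ f x}) m n) := by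
        rw [prodPi_pairBox, hlow, hhigh, pow_add]
    _ ≤ prodPi μ m n (crossingSet {f} E m n c c') := measure_mono fun p hp => by
        obtain ⟨hp₁, hp₂⟩ := mem_pairBox.1 hp
        exact ⟨fun i => (hp₁ i).1, fun j => (hp₂ j).1, f, rfl,
          fun i => (hp₁ i).2, fun j => (hp₂ j).2⟩

theorem Stable.measure_inter_toMeasurable_eq_zero (hf : Stable μ {f}) (hE : MeasurableSet E)
    (hc : c < c') :
    μ (E ∩ toMeasurable μ (E ∩ {x | f x ≤ c}) ∩ toMeasurable μ (E ∩ {x | c' ≤ f x})) = 0 := by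
  have hE' : MeasurableSet
      (E ∩ toMeasurable μ (E ∩ {x | f x ≤ c}) ∩ toMeasurable μ (E ∩ {x | c' ≤ f x})) :=
    (hE.inter (measurableSet_toMeasurable _ _)).inter (measurableSet_toMeasurable _ _)
  refine hf.measure_eq_zero_of_levelSets_full hE' hc ?_ ?_
  · rw [← measure_inter_eq_of_subset_toMeasurable hE' fun x hx => hx.1.2]
    congr 1; ext x; simp only [mem_inter_iff, mem_ofPred_eq]; tauto
  · rw [← measure_inter_eq_of_subset_toMeasurable hE' fun x hx => hx.2]
    congr 1; ext x; simp only [mem_inter_iff, mem_ofPred_eq]; tauto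

theorem Stable.exists_measurableSet_approx (hf : Stable μ {f}) (hE : MeasurableSet E)
    (hc : c < c') :
    (∃ F, MeasurableSet F ∧ F ⊆ E ∩ {x | f x < c'} ∧ μ ((E ∩ {x | f x ≤ c}) \ F) = 0) ∧
      ∃ G, MeasurableSet G ∧ G ⊆ E ∩ {x | c < f x} ∧ μ ((E ∩ {x | c' ≤ f x}) \ G) = 0 := by
  have hnull := hf.measure_inter_toMeasurable_eq_zero hE hc
  constructor
  · obtain ⟨F, hFm, hFsub, hFnull⟩ :=
      exists_measurableSet_subset_diff_of_null hE inter_subset_left hnull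
    refine ⟨F, hFm, fun x hx => ⟨(hFsub hx).1, ?_⟩, hFnull⟩
    exact show f x < c' from not_le.1 fun h => (hFsub hx).2 ⟨(hFsub hx).1, h⟩
  · obtain ⟨G, hGm, hGsub, hGnull⟩ :=
      exists_measurableSet_subset_diff_of_null hE inter_subset_left (by rwa [inter_right_comm])
    refine ⟨G, hGm, fun x hx => ⟨(hGsub hx).1, ?_⟩, hGnull⟩
    exact show c < f x from not_le.1 fun h => (hGsub hx).2 ⟨(hGsub hx).1, h⟩

theorem prodPi_crossingSet_le_iUnion_pairBox {A : Set (S → ℝ)} [Countable A] {α β : ℝ}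
    {F G : A → Set S} (hF : ∀ f : A, μ ((E ∩ {x | f.1 x ≤ α}) \ F f) = 0)
    (hG : ∀ f : A, μ ((E ∩ {x | β ≤ f.1 x}) \ G f) = 0) (m n : ℕ) :
    prodPi μ m n (crossingSet A E m n α β) ≤ prodPi μ m n (⋃ f, pairBox (F f) (G f) m n) := by
  have h₁ : ∀ᵐ p ∂prodPi μ m n, ∀ f : A, ∀ i, p.1 i ∉ (E ∩ {x | f.1 x ≤ α}) \ F f :=
    ae_all_iff.2 fun f => ae_all_iff.2 fun i =>
      Measure.quasiMeasurePreserving_fst.tendsto_ae.eventually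
        (Measure.tendsto_eval_ae_ae.eventually (measure_eq_zero_iff_ae_notMem.1 (hF f)))
  have h₂ : ∀ᵐ p ∂prodPi μ m n, ∀ f : A, ∀ j, p.2 j ∉ (E ∩ {x | β ≤ f.1 x}) \ G f :=
    ae_all_iff.2 fun f => ae_all_iff.2 fun j =>
      Measure.quasiMeasurePreserving_snd.tendsto_ae.eventually
        (Measure.tendsto_eval_ae_ae.eventually (measure_eq_zero_iff_ae_notMem.1 (hG f)))
  refine measure_mono_ae ?_
  filter_upwards [h₁, h₂] with p h₁ h₂ ⟨hp₁, hp₂, f, hfA, hlow, hhigh⟩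
  exact mem_iUnion.2 ⟨⟨f, hfA⟩, mem_pairBox.2
    ⟨fun i => not_not.1 fun h => h₁ ⟨f, hfA⟩ i ⟨⟨hp₁ i, hlow i⟩, h⟩,
      fun j => not_not.1 fun h => h₂ ⟨f, hfA⟩ j ⟨⟨hp₂ j, hhigh j⟩, h⟩⟩⟩

end Stability

/-- 3B (Lemma): let `(S, Σ, μ)` be a probability space and `B ⊆ ℝ^S` a stable set of
functions.  If `A ⊆ ℝ^S` is countable and `A \ U` is stable for every open `U ⊇ B` (for the
topology of pointwise convergence on `ℝ^S`), then `A` is stable. -/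
theorem stmt11 {S : Type*} [MeasurableSpace S] (μ : Measure S) [IsProbabilityMeasure μ]
    (B : Set (S → ℝ)) (hB : Stable μ B)
    (A : Set (S → ℝ)) (hA : A.Countable)
    (hAU : ∀ U : Set (S → ℝ), IsOpen U → B ⊆ U → Stable μ (A \ U)) :
    Stable μ A := by
  intro E hE hμE α β hαβ
  by_contra! hfull
  obtain ⟨α', hαα', hα'β⟩ := exists_between hαβ
  obtain ⟨β', hα'β', hβ'β⟩ := exists_between hα'β
  have hsingle (f : A) : Stable μ {f.1} := by
    by_cases hfB : f.1 ∈ B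
    · exact hB.mono (singleton_subset_iff.2 hfB)
    · simpa [sdiff_compl, inter_eq_right.2 (singleton_subset_iff.2 f.2)] using
        hAU {f.1}ᶜ isOpen_compl_singleton (subset_compl_singleton_iff.2 hfB)
  have := hA.to_subtype
  choose F hFm hF hFnull using fun f : A => ((hsingle f).exists_measurableSet_approx hE hαα').1
  choose G hGm hG hGnull using fun f : A => ((hsingle f).exists_measurableSet_approx hE hβ'β).2
  obtain ⟨k, l, hk, hl, hBkl⟩ := hB E hE hμE α' β' hα'β'
  obtain ⟨q, hqE, hqB, hq⟩ := exists_mem_pairBox_notMem_forall_measure_appendPair_eq hE hBkl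
    (fun m n => ⋃ f, pairBox (F f) (G f) (k + m) (l + n))
    (fun m n => MeasurableSet.iUnion fun f => (hFm f).pairBox (hGm f) _ _)
    (fun m n => iUnion_subset fun f => fun p hp => mem_pairBox.2 <| (mem_pairBox.1 hp).imp
      (fun h i => (hF f (h i)).1) (fun h j => (hG f (h j)).1))
    (fun m n => (hfull _ _ (by omega) (by omega)).trans
      (prodPi_crossingSet_le_iUnion_pairBox hFnull hGnull _ _))
  have hBU : B ⊆ (crossingFunctions q α' β')ᶜ := fun b hb hbq =>
    hqB ⟨(mem_pairBox.1 hqE).1, (mem_pairBox.1 hqE).2, b, hb, hbq⟩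
  obtain ⟨m, n, -, -, hlt⟩ := hAU _ (isClosed_crossingFunctions q α' β').isOpen_compl hBU
    E hE hμE α' β' hα'β'
  refine hlt.not_ge ?_
  rw [sdiff_compl, ← hq m n]
  exact measure_mono (setOf_appendPair_mem_subset_crossingSet hF hG q)
end

section
/- Let H ⊆ ℝ be a Lebesgue measurable set such that μ(H ∩ [a,b]) > 0 whenever a < b in ℝ, where μ is Lebesgue measure. If D is a subset of ℝ with μ*(D) > 0 (μ* the Lebesgue outer measure), then μ*(H ∩ (t + D)) > 0 for almost every t ∈ ℝ. -/
open MeasureTheory Filter Set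

open Topology
open scoped Pointwise

/-!
Replacing `D` by a measurable hull does not change the outer measure of `H ∩ (t + D)`, since
`H` is measurable, so `D` may be assumed measurable. Let `B` be the set of `t` with
`μ (H ∩ (t + D)) = 0`. By Fubini,
`∫_B μ (H ∩ (t + D)) dt = ∫_H μ (B ∩ (x - D)) dx`,
hence `μ (B ∩ (x - D)) = 0` for almost every `x ∈ H`. If `μ B > 0`, a Steinhaus-type argument
shows that `μ (B ∩ (x - D)) > 0` on a nonempty open set `U`, contradicting `μ (H ∩ U) > 0`.
-/

section AddCommGroup

variable {G : Type*} [AddCommGroup G]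

lemma mem_vadd_set_iff_sub_mem {t x : G} {D : Set G} : x ∈ t +ᵥ D ↔ x - t ∈ D := by
  rw [mem_vadd_set_iff_neg_vadd_mem, vadd_eq_add, neg_add_eq_sub]

lemma mem_vadd_neg_set_iff_sub_mem {t x : G} {D : Set G} : t ∈ x +ᵥ -D ↔ x - t ∈ D := by
  rw [mem_vadd_set_iff_sub_mem, Set.mem_neg, neg_sub]

lemma preimage_prodMk_setOf_sub_mem (t : G) (D : Set G) :
    Prod.mk t ⁻¹' {p : G × G | p.2 - p.1 ∈ D} = t +ᵥ D := by
  ext x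
  exact mem_vadd_set_iff_sub_mem.symm

lemma preimage_prodMk_swap_setOf_sub_mem (x : G) (D : Set G) :
    (fun t => (t, x)) ⁻¹' {p : G × G | p.2 - p.1 ∈ D} = x +ᵥ -D := by
  ext t
  exact mem_vadd_neg_set_iff_sub_mem.symm

end AddCommGroup

section MeasurableHull

variable {G : Type*} [AddGroup G] [MeasurableSpace G] [MeasurableAdd G]
  {μ : Measure G} [SFinite μ] [μ.IsAddLeftInvariant]

lemma measure_inter_vadd_toMeasurable {H : Set G} (hH : MeasurableSet H) (t : G) (D : Set G) :
    μ (H ∩ (t +ᵥ toMeasurable μ D)) = μ (H ∩ (t +ᵥ D)) := by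
  rw [← measure_vadd μ (-t), ← measure_vadd μ (-t) (H ∩ _), vadd_set_inter, vadd_set_inter,
    neg_vadd_vadd, neg_vadd_vadd, inter_comm, inter_comm _ D,
    Measure.measure_toMeasurable_inter_of_sFinite (hH.const_vadd (-t))]

end MeasurableHull

section Fubini

variable {G : Type*} [AddCommGroup G] [MeasurableSpace G] [MeasurableSub₂ G]
  {μ : Measure G} [SFinite μ]

lemma measurableSet_setOf_sub_mem {D : Set G} (hD : MeasurableSet D) :
    MeasurableSet {p : G × G | p.2 - p.1 ∈ D} :=
  hD.preimage (measurable_snd.sub measurable_fst)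

lemma measurable_measure_inter_vadd {K D : Set G} (hK : MeasurableSet K) (hD : MeasurableSet D) :
    Measurable fun t : G => μ (K ∩ (t +ᵥ D)) := by
  have := measurable_measure_prodMk_left (ν := μ.restrict K) (measurableSet_setOf_sub_mem hD)
  simpa only [preimage_prodMk_setOf_sub_mem, Measure.restrict_apply' hK, inter_comm] using this

lemma lintegral_measure_inter_vadd_eq {B K D : Set G} (hB : MeasurableSet B)
    (hK : MeasurableSet K) (hD : MeasurableSet D) :
    ∫⁻ t in B, μ (K ∩ (t +ᵥ D)) ∂μ = ∫⁻ x in K, μ (B ∩ (x +ᵥ -D)) ∂μ := by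
  have hS := measurableSet_setOf_sub_mem hD
  have h := (Measure.prod_apply (μ := μ.restrict B) (ν := μ.restrict K) hS).symm.trans
    (Measure.prod_apply_symm hS)
  simpa only [preimage_prodMk_setOf_sub_mem, preimage_prodMk_swap_setOf_sub_mem,
    Measure.restrict_apply' hK, Measure.restrict_apply' hB, inter_comm] using h

end Fubini

section HaarGroup

variable {G : Type*} [AddCommGroup G] [TopologicalSpace G] [IsTopologicalAddGroup G]
  [LocallyCompactSpace G] [SecondCountableTopology G] [MeasurableSpace G] [BorelSpace G]
  {μ : Measure G} [μ.IsAddHaarMeasure]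

lemma eventually_nhds_zero_measure_inter_vadd_ne_zero {E : Set G} (hE : MeasurableSet E)
    (hE0 : μ E ≠ 0) : ∀ᶠ y in 𝓝 (0 : G), μ (E ∩ (y +ᵥ E)) ≠ 0 := by
  obtain ⟨K, hKE, hK, hK0⟩ := hE.exists_lt_isCompact (μ := μ) (pos_iff_ne_zero.2 hE0)
  set L := closure K
  have hLc : IsClosed L := isClosed_closure
  have hLE : L ⊆ E := hK.closure_subset_measurableSet hE hKE
  have hL0 : μ L ≠ 0 := (hK0.trans_le (measure_mono subset_closure)).ne'
  filter_upwards [eventually_nhds_zero_measure_vadd_sdiff_lt (μ := μ) hK.closure hLc hL0]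
    with y hy h0
  -- `y +ᵥ L` has the measure of `L`, so it cannot lie almost entirely outside `L`.
  have hinter : μ ((y +ᵥ L) ∩ L) = 0 :=
    measure_mono_null
      ((inter_subset_inter (vadd_set_mono hLE) hLE).trans (inter_comm _ _).subset) h0
  have hsplit := measure_inter_add_sdiff (μ := μ) (y +ᵥ L) hLc.measurableSet
  rw [hinter, zero_add, measure_vadd] at hsplit
  exact hy.ne hsplit

/-- Fubini gives `x₀` with `E := B ∩ (x₀ - D)` non-null, and for `x` near `x₀` the set
`B ∩ (x - D)` contains `E ∩ ((x - x₀) + E)`. -/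
lemma exists_eventually_nhds_measure_inter_vadd_neg_ne_zero {B D : Set G} (hB : MeasurableSet B)
    (hD : MeasurableSet D) (hB0 : μ B ≠ 0) (hD0 : μ D ≠ 0) :
    ∃ x₀ : G, ∀ᶠ x in 𝓝 x₀, μ (B ∩ (x +ᵥ -D)) ≠ 0 := by
  obtain ⟨x₀, hx₀⟩ : ∃ x₀ : G, μ (B ∩ (x₀ +ᵥ -D)) ≠ 0 := by
    by_contra! h
    have hfubini := lintegral_measure_inter_vadd_eq (μ := μ) hB MeasurableSet.univ hD
    simp only [univ_inter, measure_vadd, setLIntegral_const, Measure.restrict_univ, h,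
      lintegral_zero] at hfubini
    exact mul_ne_zero hD0 hB0 hfubini
  set E := B ∩ (x₀ +ᵥ -D)
  have hE : MeasurableSet E := hB.inter (hD.neg.const_vadd x₀)
  refine ⟨x₀, ?_⟩
  have hsub : Tendsto (fun x => x - x₀) (𝓝 x₀) (𝓝 0) :=
    (continuous_sub_right x₀).tendsto' x₀ 0 (sub_self x₀)
  filter_upwards [hsub.eventually (eventually_nhds_zero_measure_inter_vadd_ne_zero hE hx₀)]
    with x hx
  refine fun h0 => hx (measure_mono_null ?_ h0)
  rintro t ⟨⟨htB, -⟩, htE⟩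
  rw [mem_vadd_set_iff_sub_mem] at htE
  refine ⟨htB, mem_vadd_neg_set_iff_sub_mem.2 ?_⟩
  convert mem_vadd_neg_set_iff_sub_mem.1 htE.2 using 1
  abel

theorem ae_measure_inter_vadd_ne_zero {H D : Set G} (hH : MeasurableSet H)
    (hH0 : ∀ U, IsOpen U → U.Nonempty → μ (H ∩ U) ≠ 0) (hD : MeasurableSet D)
    (hD0 : μ D ≠ 0) : ∀ᵐ t : G ∂μ, μ (H ∩ (t +ᵥ D)) ≠ 0 := by
  set B := {t : G | μ (H ∩ (t +ᵥ D)) = 0}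
  have hB : MeasurableSet B := measurable_measure_inter_vadd hH hD (measurableSet_singleton 0)
  suffices μ B = 0 by simpa [ae_iff, B] using this
  by_contra hB0
  obtain ⟨x₀, hx₀⟩ := exists_eventually_nhds_measure_inter_vadd_neg_ne_zero hB hD hB0 hD0
  obtain ⟨U, hBU, hU, hx₀U⟩ := eventually_nhds_iff.1 hx₀
  have hfubini : ∫⁻ x in H, μ (B ∩ (x +ᵥ -D)) ∂μ = 0 := by
    rw [← lintegral_measure_inter_vadd_eq hB hH hD]
    exact setLIntegral_eq_zero hB (fun t ht => ht)
  have hae := (lintegral_eq_zero_iff (measurable_measure_inter_vadd hB hD.neg)).1 hfubini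
  rw [EventuallyEq, ae_restrict_iff' hH] at hae
  simp only [Pi.zero_apply] at hae
  refine hH0 U hU ⟨x₀, hx₀U⟩ (measure_eq_zero_iff_ae_notMem.2 ?_)
  filter_upwards [hae] with x hx ⟨hxH, hxU⟩
  exact hBU x hxU (hx hxH)

end HaarGroup

lemma Real.measure_inter_ne_zero_of_isOpen {H : Set ℝ}
    (hH : ∀ a b : ℝ, a < b → 0 < volume (H ∩ Icc a b)) {U : Set ℝ} (hU : IsOpen U)
    (hne : U.Nonempty) : volume (H ∩ U) ≠ 0 := by
  obtain ⟨x, hx⟩ := hne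
  obtain ⟨ε, hε, hball⟩ := Metric.isOpen_iff.1 hU x hx
  have hIcc : Icc (x - ε / 2) (x + ε / 2) ⊆ U := by
    rw [← Real.closedBall_eq_Icc]
    exact (Metric.closedBall_subset_ball (half_lt_self hε)).trans hball
  exact ((hH _ _ (by linarith)).trans_le (measure_mono (inter_subset_inter_right H hIcc))).ne'

-- `volume` of a possibly non-measurable set is its outer measure.
/-- 3C(a): if `H ⊆ ℝ` is measurable and meets every non-trivial interval in a set of
positive measure, and `D ⊆ ℝ` has positive outer measure, then for almost every `t`,
`H ∩ (t + D)` has positive outer measure.  (A `Measure` applied to an arbitrary, possibly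
non-measurable, set gives its outer measure.) -/
theorem stmt12 (H : Set ℝ) (hH : MeasurableSet H)
    (hHpos : ∀ a b : ℝ, a < b → 0 < volume (H ∩ Set.Icc a b))
    (D : Set ℝ) (hD : 0 < volume D) :
    ∀ᵐ t : ℝ, 0 < volume (H ∩ ((fun d => t + d) '' D)) := by
  have hM : volume (toMeasurable volume D) ≠ 0 := by rw [measure_toMeasurable]; exact hD.ne'
  filter_upwards [ae_measure_inter_vadd_ne_zero hH
    (fun _ => Real.measure_inter_ne_zero_of_isOpen hHpos) (measurableSet_toMeasurable _ _) hM]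
    with t ht
  change 0 < volume (H ∩ (t +ᵥ D))
  rw [← measure_inter_vadd_toMeasurable hH]
  exact pos_iff_ne_zero.2 ht
end

section
/- Let H ⊆ ℝ be a Lebesgue measurable set such that μ(H ∩ [a,b]) > 0 whenever a < b in ℝ, where μ is Lebesgue measure. If ⟨Dₙ⟩_{n∈ℕ} is a sequence of subsets of ℝ each of positive Lebesgue outer measure, then there is a sequence ⟨tₙ⟩_{n∈ℕ} of reals such that tₘ ∈ Dₘ for every m and tₘ + tₙ ∈ H whenever m < n in ℕ. -/
open MeasureTheory Filter Set

/-!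
For every set `A` of positive outer measure, `A ∩ (H - t)` has positive outer measure for almost
every `t`. Otherwise the bad set `N` of translations has positive measure; taking Lebesgue density
points `a` of `N` and `b` of (a measurable hull of) `A`, every `s` near `a + b` has
`μ (N ∩ (s - A)) ≥ ε / 2`, whereas the shear `(t, y) ↦ (t, t + y)` and Fubini show that
`μ (N ∩ (s - A)) = 0` for almost every `s ∈ H`, and `H` has positive measure near `a + b`.
Given this, choose the `tₙ` greedily: for almost every `x` in `Dₙ ∩ ⋂_{m<n} (H - tₘ)`, which has
positive outer measure, all the sets `Dⱼ ∩ ⋂_{m<n} (H - tₘ) ∩ (H - x)` with `j > n` still have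
positive outer measure; let `tₙ` be such an `x`.
-/

theorem exists_seq_forall_mem_of_forall_exists {α : Type*} (P : Set α → Prop) (R : α → Set α)
    (step : ∀ E : ℕ → Set α, (∀ j, P (E j)) → ∃ x ∈ E 0, ∀ j, P (E (j + 1) ∩ R x))
    (D : ℕ → Set α) (hD : ∀ n, P (D n)) :
    ∃ t : ℕ → α, (∀ m, t m ∈ D m) ∧ ∀ m n : ℕ, m < n → t n ∈ R (t m) := by
  choose pt hpt_mem hpt_good using step
  let next : {E : ℕ → Set α // ∀ j, P (E j)} → {E : ℕ → Set α // ∀ j, P (E j)} :=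
    fun E => ⟨fun j => E.1 (j + 1) ∩ R (pt E.1 E.2), hpt_good E.1 E.2⟩
  -- `E n j` stands for `D (n + j) ∩ ⋂ m < n, R (t m)`.
  let E : ℕ → {E : ℕ → Set α // ∀ j, P (E j)} := fun n => next^[n] ⟨D, hD⟩
  let t n := pt (E n).1 (E n).2
  have hE_succ n j : (E (n + 1)).1 j = (E n).1 (j + 1) ∩ R (t n) := by
    simp only [E, Function.iterate_succ_apply']
    rfl
  have hE_add n k j : (E (n + k)).1 j ⊆ (E n).1 (j + k) := by
    induction k generalizing j with
    | zero => rfl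
    | succ k ih =>
      rw [← add_assoc, hE_succ, ← add_comm 1 k, ← add_assoc]
      exact inter_subset_left.trans (ih (j + 1))
  refine ⟨t, fun m => ?_, fun m n hmn => ?_⟩
  · have := hE_add 0 m 0
    simp only [zero_add] at this
    exact this (hpt_mem _ _)
  · obtain ⟨k, rfl⟩ := Nat.exists_eq_add_of_lt hmn
    have := hE_add (m + 1) k 0 (by rw [add_right_comm]; exact hpt_mem _ (E (m + k + 1)).2)
    rw [hE_succ] at this
    exact this.2

theorem measure_add_measure_le_measure_add_measure_inter {α : Type*} [MeasurableSpace α]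
    {μ : Measure α} {s t u : Set α} (ht : MeasurableSet t) (hsu : s ⊆ u) (htu : t ⊆ u) :
    μ s + μ t ≤ μ u + μ (s ∩ t) := by
  rw [← measure_union_add_inter s ht]
  gcongr
  exact union_subset hsu htu

theorem lintegral_measure_inter_add_preimage_eq {G : Type*} [AddCommGroup G] [MeasurableSpace G]
    [MeasurableAdd₂ G] [MeasurableNeg G] (μ : Measure G) [SFinite μ] [μ.IsAddLeftInvariant]
    {N B H : Set G} (hN : MeasurableSet N) (hB : MeasurableSet B) (hH : MeasurableSet H) :
    ∫⁻ t in N, μ (B ∩ (t + ·) ⁻¹' H) ∂μ = ∫⁻ s in H, μ (N ∩ (s - ·) ⁻¹' B) ∂μ := by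
  set E : Set (G × G) := {q | q.1 ∈ N ∧ q.2 - q.1 ∈ B ∧ q.2 ∈ H}
  have hE : MeasurableSet E :=
    (hN.preimage measurable_fst).inter
      ((hB.preimage (measurable_snd.sub measurable_fst)).inter (hH.preimage measurable_snd))
  have hshear := measurePreserving_prod_add μ μ
  calc ∫⁻ t in N, μ (B ∩ (t + ·) ⁻¹' H) ∂μ
      = μ.prod μ ((fun z : G × G => (z.1, z.1 + z.2)) ⁻¹' E) := by
        rw [Measure.prod_apply (hE.preimage hshear.measurable), ← lintegral_indicator hN]
        congr 1 with t
        by_cases ht : t ∈ N <;> simp [E, ht, preimage, indicator]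
        rfl
    _ = μ.prod μ E := hshear.measure_preimage hE.nullMeasurableSet
    _ = ∫⁻ s in H, μ (N ∩ (s - ·) ⁻¹' B) ∂μ := by
        rw [Measure.prod_apply_symm hE, ← lintegral_indicator hH]
        congr 1 with s
        by_cases hs : s ∈ H <;> simp [E, hs, preimage, indicator]
        rfl

theorem exists_forall_ofReal_mul_le_volume_inter_Icc {S : Set ℝ} (hS : 0 < volume S) {c : ℝ}
    (hc : c < 2) :
    ∃ x, ∃ δ > 0, ∀ ε ∈ Ioc 0 δ, ENNReal.ofReal (c * ε) ≤ volume (S ∩ Icc (x - ε) (x + ε)) := by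
  have : (ae (volume.restrict S)).NeBot := ae_neBot.2 (by simpa using hS.ne')
  obtain ⟨x, hx⟩ := (Besicovitch.ae_tendsto_measure_inter_div volume S).exists
  have hc' : ENNReal.ofReal (c / 2) < 1 := by rw [ENNReal.ofReal_lt_one]; linarith
  obtain ⟨δ, hδ, hdens⟩ := mem_nhdsGT_iff_exists_Ioc_subset.1 (hx.eventually (lt_mem_nhds hc'))
  refine ⟨x, δ, hδ, fun ε hε => ?_⟩
  have hball : volume (Metric.closedBall x ε) = ENNReal.ofReal (2 * ε) :=
    Real.volume_closedBall x ε
  have hlt := (ENNReal.lt_div_iff_mul_lt (Or.inl (by simp [hball, hε.1]))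
    (Or.inl (hball ▸ ENNReal.ofReal_ne_top))).1 (hdens hε)
  rw [hball, ← ENNReal.ofReal_mul' (by linarith [hε.1]), Real.closedBall_eq_Icc] at hlt
  rw [show c * ε = c / 2 * (2 * ε) by ring]
  exact hlt.le

theorem ofReal_le_volume_inter_sub_preimage {N B : Set ℝ} (hB : MeasurableSet B) {a b ε s : ℝ}
    (hε : 0 ≤ ε) (hN : ENNReal.ofReal (7 / 4 * ε) ≤ volume (N ∩ Icc (a - ε) (a + ε)))
    (hB' : ENNReal.ofReal (7 / 4 * ε) ≤ volume (B ∩ Icc (b - ε) (b + ε)))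
    (hs : s ∈ Icc (a + b - ε / 2) (a + b + ε / 2)) :
    ENNReal.ofReal (ε / 2) ≤ volume (N ∩ (s - ·) ⁻¹' B) := by
  set X := N ∩ Icc (a - ε) (a + ε)
  set Y := (s - ·) ⁻¹' (B ∩ Icc (b - ε) (b + ε))
  have hY : MeasurableSet Y := (hB.inter measurableSet_Icc).preimage (measurable_const_sub s)
  have hYvol : volume Y = volume (B ∩ Icc (b - ε) (b + ε)) :=
    (volume.measurePreserving_sub_left s).measure_preimage
      (hB.inter measurableSet_Icc).nullMeasurableSet
  have hXY : volume X + volume Y ≤ volume (Icc (a - 3 / 2 * ε) (a + 3 / 2 * ε)) + volume (X ∩ Y) :=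
    measure_add_measure_le_measure_add_measure_inter hY
      (fun t ht => ⟨by linarith [ht.2.1], by linarith [ht.2.2]⟩)
      fun t ht => by
        simp only [Y, mem_preimage, mem_inter_iff, mem_Icc] at ht
        constructor <;> linarith [hs.1, hs.2]
  rw [Real.volume_Icc, hYvol] at hXY
  have key : ENNReal.ofReal (3 * ε) + ENNReal.ofReal (ε / 2) ≤
      ENNReal.ofReal (3 * ε) + volume (X ∩ Y) := calc
    _ = ENNReal.ofReal (7 / 4 * ε) + ENNReal.ofReal (7 / 4 * ε) := by
      rw [← ENNReal.ofReal_add (by positivity) (by positivity),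
        ← ENNReal.ofReal_add (by positivity) (by positivity)]
      ring_nf
    _ ≤ volume X + volume Y := add_le_add hN (hYvol ▸ hB')
    _ ≤ _ := by convert hXY using 3; ring
  exact ((ENNReal.add_le_add_iff_left ENNReal.ofReal_ne_top).1 key).trans
    (measure_mono fun t ht => ⟨ht.1.1, ht.2.1⟩)

theorem volume_eq_zero_of_forall_volume_inter_add_preimage_eq_zero {H : Set ℝ}
    (hH : MeasurableSet H) (hHpos : ∀ a b : ℝ, a < b → 0 < volume (H ∩ Icc a b)) {N B : Set ℝ}
    (hN : MeasurableSet N) (hB : MeasurableSet B) (hB₀ : 0 < volume B)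
    (hNB : ∀ t ∈ N, volume (B ∩ (t + ·) ⁻¹' H) = 0) : volume N = 0 := by
  by_contra hN₀
  obtain ⟨a, δ₁, hδ₁, ha⟩ :=
    exists_forall_ofReal_mul_le_volume_inter_Icc (pos_iff_ne_zero.2 hN₀) (c := 7 / 4) (by norm_num)
  obtain ⟨b, δ₂, hδ₂, hb⟩ :=
    exists_forall_ofReal_mul_le_volume_inter_Icc hB₀ (c := 7 / 4) (by norm_num)
  set ε := min δ₁ δ₂
  have hε : 0 < ε := lt_min hδ₁ hδ₂
  set J := Icc (a + b - ε / 2) (a + b + ε / 2)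
  have hlower : ENNReal.ofReal (ε / 2) * volume (H ∩ J) ≤
      ∫⁻ s in H, volume (N ∩ (s - ·) ⁻¹' B) := calc
    _ = ∫⁻ _ in H ∩ J, ENNReal.ofReal (ε / 2) := (setLIntegral_const _ _).symm
    _ ≤ ∫⁻ s in H ∩ J, volume (N ∩ (s - ·) ⁻¹' B) :=
      setLIntegral_mono' (hH.inter measurableSet_Icc) fun s hs =>
        ofReal_le_volume_inter_sub_preimage hB hε.le (ha ε ⟨hε, min_le_left _ _⟩)
          (hb ε ⟨hε, min_le_right _ _⟩) hs.2
    _ ≤ _ := lintegral_mono_set inter_subset_left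
  have hzero : ∫⁻ t in N, volume (B ∩ (t + ·) ⁻¹' H) = 0 :=
    (setLIntegral_congr_fun hN hNB).trans lintegral_zero
  rw [lintegral_measure_inter_add_preimage_eq volume hN hB hH] at hzero
  have hpos : 0 < ENNReal.ofReal (ε / 2) * volume (H ∩ J) :=
    ENNReal.mul_pos (ENNReal.ofReal_pos.2 (half_pos hε)).ne' (hHpos _ _ (by linarith)).ne'
  exact (hzero ▸ hlower).not_gt hpos

theorem ae_volume_inter_add_preimage_pos {H : Set ℝ} (hH : MeasurableSet H)
    (hHpos : ∀ a b : ℝ, a < b → 0 < volume (H ∩ Icc a b))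
    {A : Set ℝ} (hA : 0 < volume A) :
    ∀ᵐ t, 0 < volume (A ∩ (t + ·) ⁻¹' H) := by
  set B := toMeasurable volume A
  have hB : MeasurableSet B := measurableSet_toMeasurable _ _
  have hBA t : volume (B ∩ (t + ·) ⁻¹' H) = volume (A ∩ (t + ·) ⁻¹' H) :=
    Measure.measure_toMeasurable_inter_of_sFinite (hH.preimage (measurable_const_add t)) A
  set N := {t | volume (B ∩ (t + ·) ⁻¹' H) = 0}
  have hN : MeasurableSet N :=
    measurable_measure_prodMk_left (ν := volume)
      ((hB.preimage measurable_snd).inter (hH.preimage measurable_add)) (measurableSet_singleton 0)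
  have hN₀ : volume N = 0 :=
    volume_eq_zero_of_forall_volume_inter_add_preimage_eq_zero hH hHpos hN hB
      (by rwa [measure_toMeasurable]) fun _ ht => ht
  filter_upwards [measure_eq_zero_iff_ae_notMem.1 hN₀] with t ht
  exact hBA t ▸ pos_iff_ne_zero.2 ht

theorem exists_mem_forall_volume_inter_add_preimage_pos {H : Set ℝ} (hH : MeasurableSet H)
    (hHpos : ∀ a b : ℝ, a < b → 0 < volume (H ∩ Icc a b)) (E : ℕ → Set ℝ)
    (hE : ∀ j, 0 < volume (E j)) : ∃ x ∈ E 0, ∀ j, 0 < volume (E (j + 1) ∩ (x + ·) ⁻¹' H) :=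
  Measure.exists_mem_of_measure_ne_zero_of_ae (hE 0).ne' <| ae_restrict_of_ae <|
    ae_all_iff.2 fun j => ae_volume_inter_add_preimage_pos hH hHpos (hE (j + 1))

/-- 3C(b): if `H ⊆ ℝ` is measurable and meets every non-trivial interval in a set of
positive measure, and `⟨Dₙ⟩` is a sequence of sets of positive outer measure, then there is
a sequence `⟨tₙ⟩` with `tₘ ∈ Dₘ` for every `m` and `tₘ + tₙ ∈ H` whenever `m < n`. -/
theorem stmt13 (H : Set ℝ) (hH : MeasurableSet H)
    (hHpos : ∀ a b : ℝ, a < b → 0 < volume (H ∩ Set.Icc a b))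
    (D : ℕ → Set ℝ) (hD : ∀ n, 0 < volume (D n)) :
    ∃ t : ℕ → ℝ, (∀ m, t m ∈ D m) ∧ ∀ m n : ℕ, m < n → t m + t n ∈ H :=
  exists_seq_forall_mem_of_forall_exists (fun S => 0 < volume S) (fun x => (x + ·) ⁻¹' H)
    (exists_mem_forall_volume_inter_add_preimage_pos hH hHpos) D hD
end

section
/- Let H ⊆ ℝ be a Lebesgue measurable set such that μ(H ∩ [a,b]) > 0 whenever a < b in ℝ, where μ is Lebesgue measure. Let 𝒞 be the set of subsets C of [0,1] such that s + t ∉ H whenever s, t are distinct members of C, and let B ⊆ ℝ^{[0,1]} be the set of characteristic functions of members of 𝒞. Then B is stable with respect to Lebesgue measure on [0,1]. -/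
open MeasureTheory Filter Set

/-!
If `f = 1_C` is `≤ α` at `t` and `≥ β > α` at `u₀` and `u₁`, then `u₀, u₁ ∈ C`, so `u₀ = u₁` or
`u₀ + u₁ ∉ H`. With `m = 1`, `n = 2` it therefore suffices that `{(x, y) ∈ E² : x + y ∈ H}` has
positive measure, the diagonal being null. That measure is `∫_H 1_E ⋆ 1_E`, and a Steinhaus-type
argument (continuity of translation on a compact `K ⊆ E` of positive measure) makes `1_E ⋆ 1_E`
positive on a neighbourhood of some point, where `H` has positive measure.
-/

open Topology
open scoped ENNReal Pointwise

theorem MeasureTheory.Measure.prod_diagonal_eq_zero {α : Type*} [MeasurableSpace α]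
    [MeasurableEq α] [MeasurableSingletonClass α] (μ ν : Measure α) [SFinite ν]
    [NullSingletonClass ν] :
    μ.prod ν (diagonal α) = 0 := by
  rw [Measure.prod_apply measurableSet_diagonal]
  have hslice : ∀ x : α, Prod.mk x ⁻¹' diagonal α = {x} := fun x => by ext; simp [eq_comm]
  simp [hslice]

section SumRepresentations

variable {G : Type*} [AddCommGroup G] [TopologicalSpace G] [IsTopologicalAddGroup G]
  [LocallyCompactSpace G] [SecondCountableTopology G] [MeasurableSpace G] [BorelSpace G]
  {μ : Measure G} [μ.IsAddHaarMeasure] {E H : Set G}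

/-- The convolution `(1_E ⋆ 1_E) z`. -/
def sumRepMeasure (μ : Measure G) (E : Set G) (z : G) : ℝ≥0∞ :=
  μ {x | x ∈ E ∧ z - x ∈ E}

theorem measurable_sumRepMeasure (hE : MeasurableSet E) : Measurable (sumRepMeasure μ E) :=
  measurable_measure_prodMk_right (s := {q : G × G | q.1 ∈ E ∧ q.2 - q.1 ∈ E})
    ((measurable_fst hE).inter ((measurable_snd.sub measurable_fst) hE))

theorem setLIntegral_sumRepMeasure (hE : MeasurableSet E) (hH : MeasurableSet H) :
    ∫⁻ z in H, sumRepMeasure μ E z ∂μ =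
      μ.prod μ {p | p.1 ∈ E ∧ p.2 ∈ E ∧ p.1 + p.2 ∈ H} := by
  set A := {q : G × G | q.1 ∈ E ∧ q.2 - q.1 ∈ E ∧ q.2 ∈ H}
  have hA : MeasurableSet A := (measurable_fst hE).inter
    (((measurable_snd.sub measurable_fst) hE).inter (measurable_snd hH))
  calc ∫⁻ z in H, sumRepMeasure μ E z ∂μ = ∫⁻ z, μ ((fun x => (x, z)) ⁻¹' A) ∂μ := by
        rw [← lintegral_indicator hH]
        congr 1 with z
        by_cases hz : z ∈ H <;> simp [hz, A, sumRepMeasure]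
    _ = μ.prod μ A := (Measure.prod_apply_symm hA).symm
    _ = μ.prod μ {p | p.1 ∈ E ∧ p.2 ∈ E ∧ p.1 + p.2 ∈ H} := by
        rw [← (measurePreserving_prod_add μ μ).measure_preimage hA.nullMeasurableSet]
        congr 1 with p
        simp [A]

theorem exists_sumRepMeasure_ne_zero (hE : MeasurableSet E) (hE0 : μ E ≠ 0) :
    ∃ z, sumRepMeasure μ E z ≠ 0 := by
  by_contra! h
  have htotal := setLIntegral_sumRepMeasure (μ := μ) hE MeasurableSet.univ
  have hprod : {p : G × G | p.1 ∈ E ∧ p.2 ∈ E ∧ p.1 + p.2 ∈ univ} = E ×ˢ E := by ext; simp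
  simp only [h, lintegral_zero, hprod, Measure.prod_prod] at htotal
  exact mul_ne_zero hE0 hE0 htotal.symm

theorem eventually_sumRepMeasure_pos {K : Set G} (hK : IsCompact K) (hKc : IsClosed K) {z₀ : G}
    (hz₀ : 0 < sumRepMeasure μ K z₀) : ∀ᶠ z in 𝓝 z₀, 0 < sumRepMeasure μ K z := by
  set L := (fun x => z₀ - x) ⁻¹' K
  have hL : IsCompact L := (Homeomorph.subLeft z₀).isCompact_preimage.2 hK
  have hLc : IsClosed L := hKc.preimage (continuous_sub_left z₀)
  have hshift : Tendsto (fun z => z₀ - z) (𝓝 z₀) (𝓝 0) := by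
    simpa using (continuous_sub_left z₀).tendsto z₀
  filter_upwards [hshift.eventually (eventually_nhds_zero_measure_vadd_sdiff_lt hL hLc
    hz₀.ne' (μ := μ))] with z hz
  -- Moving `z₀` to `z` loses from `K ∩ L` only a translate of `((z₀ - z) +ᵥ L) \ L`.
  have hcover : {x | x ∈ K ∧ z₀ - x ∈ K} ⊆
      {x | x ∈ K ∧ z - x ∈ K} ∪ ((z - z₀) +ᵥ (((z₀ - z) +ᵥ L) \ L)) := by
    rintro x ⟨hxK, hxL⟩
    by_cases hx : z - x ∈ K
    · exact Or.inl ⟨hxK, hx⟩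
    · refine Or.inr ?_
      simp only [mem_vadd_set_iff_neg_vadd_mem, Set.mem_sdiff, mem_preimage, L, vadd_eq_add]
      constructor
      · convert hxL using 1; abel
      · convert hx using 2; abel
  have hle : sumRepMeasure μ K z₀ ≤ sumRepMeasure μ K z + μ (((z₀ - z) +ᵥ L) \ L) := by
    rw [← measure_vadd μ (z - z₀)]
    exact (measure_mono hcover).trans (measure_union_le _ _)
  by_contra! h0
  rw [nonpos_iff_eq_zero.1 h0, zero_add] at hle
  exact hle.not_gt hz

theorem exists_eventually_sumRepMeasure_pos (hE : MeasurableSet E) (hE0 : μ E ≠ 0) :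
    ∃ z₀, ∀ᶠ z in 𝓝 z₀, 0 < sumRepMeasure μ E z := by
  obtain ⟨K, hKE, hK, hK0⟩ := hE.exists_lt_isCompact (pos_iff_ne_zero.2 hE0)
  have hKE' : closure K ⊆ E := hK.closure_subset_measurableSet hE hKE
  have hK0' : μ (closure K) ≠ 0 := by rw [hK.measure_closure]; exact hK0.ne'
  obtain ⟨z₀, hz₀⟩ := exists_sumRepMeasure_ne_zero isClosed_closure.measurableSet hK0'
  refine ⟨z₀, (eventually_sumRepMeasure_pos hK.closure isClosed_closure
    (pos_iff_ne_zero.2 hz₀)).mono fun z hz => hz.trans_le ?_⟩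
  exact measure_mono fun x hx => ⟨hKE' hx.1, hKE' hx.2⟩

theorem prod_setOf_add_mem_pos (hE : MeasurableSet E) (hE0 : μ E ≠ 0) (hH : MeasurableSet H)
    (hHpos : ∀ z, ∀ U ∈ 𝓝 z, 0 < μ (H ∩ U)) :
    0 < μ.prod μ {p | p.1 ∈ E ∧ p.2 ∈ E ∧ p.1 + p.2 ∈ H} := by
  obtain ⟨z₀, hz₀⟩ := exists_eventually_sumRepMeasure_pos hE hE0
  rw [← setLIntegral_sumRepMeasure hE hH, setLIntegral_pos_iff (measurable_sumRepMeasure hE)]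
  refine (hHpos z₀ _ hz₀).trans_le (measure_mono fun z hz => ⟨?_, hz.1⟩)
  exact (hz.2 : 0 < sumRepMeasure μ E z).ne'

theorem prod_restrict_setOf_eq_or_add_notMem_lt [T2Space G] [NullSingletonClass μ] {S : Set G}
    (hS : MeasurableSet S) (hE : MeasurableSet E) (hE0 : μ.restrict S E ≠ 0)
    (hEfin : μ.restrict S E ≠ ∞) (hH : MeasurableSet H)
    (hHpos : ∀ z, ∀ U ∈ 𝓝 z, 0 < μ (H ∩ U)) :
    (μ.restrict S).prod (μ.restrict S) {p | p.1 ∈ E ∧ p.2 ∈ E ∧ (p.1 = p.2 ∨ p.1 + p.2 ∉ H)}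
      < μ.restrict S E * μ.restrict S E := by
  set ν := μ.restrict S
  set W := {p : G × G | p.1 ∈ E ∧ p.2 ∈ E ∧ (p.1 = p.2 ∨ p.1 + p.2 ∉ H)}
  set B := {p : G × G | p.1 ∈ E ∧ p.2 ∈ E ∧ p.1 + p.2 ∈ H}
  have hB : MeasurableSet B := (measurable_fst hE).inter
    ((measurable_snd hE).inter ((measurable_fst.add measurable_snd) hH))
  have hBpos : 0 < ν.prod ν B := by
    rw [Measure.prod_restrict, Measure.restrict_apply hB]
    convert prod_setOf_add_mem_pos (hE.inter hS) (by rwa [← Measure.restrict_apply hE]) hH hHpos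
      using 2
    ext p
    simp only [B, mem_inter_iff, mem_prod, mem_ofPred_eq]
    tauto
  have hdisj : ν.prod ν (W ∩ B) = 0 :=
    measure_mono_null (fun p hp => hp.1.2.2.resolve_right (not_not.2 hp.2.2.2))
      (Measure.prod_diagonal_eq_zero ν ν)
  have hsum : ν.prod ν W + ν.prod ν B ≤ ν E * ν E := by
    rw [← measure_union_add_inter W hB, hdisj, add_zero, ← Measure.prod_prod]
    exact measure_mono (union_subset (fun p hp => ⟨hp.1, hp.2.1⟩) fun p hp => ⟨hp.1, hp.2.1⟩)
  have hWfin : ν.prod ν W ≠ ∞ :=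
    ne_top_of_le_ne_top (ENNReal.mul_ne_top hEfin hEfin) (le_self_add.trans hsum)
  exact (ENNReal.lt_add_right hWfin hBpos.ne').trans_le hsum

end SumRepresentations

theorem Set.mem_of_indicator_lt {α M : Type*} [Zero M] [Preorder M] {s : Set α} {f : α → M}
    (hf : 0 ≤ f) {x y : α} (h : s.indicator f x < s.indicator f y) : y ∈ s := by
  by_contra hy
  rw [indicator_of_notMem hy] at h
  exact h.not_ge (indicator_nonneg (fun a _ => hf a) x)

theorem Real.volume_inter_pos_of_mem_nhds {H : Set ℝ}
    (hHpos : ∀ a b : ℝ, a < b → 0 < volume (H ∩ Icc a b)) {z : ℝ} {U : Set ℝ} (hU : U ∈ 𝓝 z) :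
    0 < volume (H ∩ U) := by
  obtain ⟨ε, hε, hball⟩ := Metric.mem_nhds_iff.1 hU
  have hIcc : Icc (z - ε / 2) (z + ε / 2) ⊆ U := by
    rw [← Real.closedBall_eq_Icc]
    exact (Metric.closedBall_subset_ball (by linarith)).trans hball
  exact (hHpos _ _ (by linarith)).trans_le (measure_mono (inter_subset_inter_right H hIcc))

/-- 3D: if `H ⊆ ℝ` is measurable and meets every non-trivial interval in a set of positive
measure, then the set of characteristic functions of subsets `C` of `[0,1]` such that
`s + t ∉ H` for all distinct `s, t ∈ C` is stable with respect to Lebesgue measure on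
`[0,1]`. -/
theorem stmt14 (H : Set ℝ) (hH : MeasurableSet H)
    (hHpos : ∀ a b : ℝ, a < b → 0 < volume (H ∩ Set.Icc a b)) :
    Stable (volume.restrict (Set.Icc (0:ℝ) 1))
      {g : ℝ → ℝ | ∃ C : Set ℝ, C ⊆ Set.Icc (0:ℝ) 1 ∧
        (∀ s ∈ C, ∀ t ∈ C, s ≠ t → s + t ∉ H) ∧
        g = C.indicator fun _ => (1:ℝ)} := by
  intro E hE hEpos α β hαβ
  set μ := volume.restrict (Icc (0:ℝ) 1)
  set W := {p : ℝ × ℝ | p.1 ∈ E ∧ p.2 ∈ E ∧ (p.1 = p.2 ∨ p.1 + p.2 ∉ H)}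
  have hW : MeasurableSet W := (measurable_fst hE).inter ((measurable_snd hE).inter
    ((measurableSet_eq_fun measurable_fst measurable_snd).union
      ((measurable_fst.add measurable_snd) hH).compl))
  have hWlt : μ.prod μ W < μ E * μ E :=
    prod_restrict_setOf_eq_or_add_notMem_lt measurableSet_Icc hE hEpos.ne' (measure_ne_top μ E)
      hH fun _ _ => Real.volume_inter_pos_of_mem_nhds hHpos
  refine ⟨1, 2, one_pos, two_pos, ?_⟩
  calc _ ≤ (Measure.pi fun _ => μ).prod (Measure.pi fun _ => μ)
        ((MeasurableEquiv.funUnique (Fin 1) ℝ ⁻¹' E) ×ˢ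
          (MeasurableEquiv.piFinTwo (fun _ => ℝ) ⁻¹' W)) := by
        refine measure_mono ?_
        rintro ⟨t, u⟩ ⟨ht, hu, f, ⟨C, -, hC, rfl⟩, hα, hβ⟩
        have huC : ∀ j, u j ∈ C := fun j =>
          mem_of_indicator_lt (fun _ => zero_le_one) ((hα 0).trans_lt (hαβ.trans_le (hβ j)))
        exact ⟨ht 0, hu 0, hu 1, or_iff_not_imp_left.2 (hC _ (huC 0) _ (huC 1))⟩
    _ = μ E * μ.prod μ W := by
        rw [Measure.prod_prod]
        exact congr_arg₂ (· * ·)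
          ((measurePreserving_funUnique μ (Fin 1)).measure_preimage hE.nullMeasurableSet)
          ((measurePreserving_piFinTwo _).measure_preimage hW.nullMeasurableSet)
    _ < μ E * (μ E * μ E) := ENNReal.mul_lt_mul_right hEpos.ne' (measure_ne_top μ E) hWlt
    _ = μ E ^ (1 + 2) := by ring
end

section
/- Let φ : [0,1] → L∞([0,1]) be the function assigning to each t ∈ [0,1] the equivalence class in L∞([0,1]) (with respect to Lebesgue measure) of the characteristic function of the interval [0,t]. Then φ is bounded and McShane integrable, but φ is not Bochner integrable. -/
open MeasureTheory Filter Set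

/-!
If `s < t` in `[0,1]`, then `φ t - φ s` is the indicator of `(s, t]`, which has norm `1` in
`L∞`; so `φ` is `1`-separated on `[0,1]`. An a.e. strongly measurable function is a.e. valued
in a separable set, which contains only countably many `1`-separated points, so `[0,1]` would be
null. Hence `φ` is not Bochner integrable.

For a McShane partition subordinate to the constant gauge `ε`, at almost every `s` the Riemann
sum is the total length of the intervals whose tags are `≥ s`. These intervals lie in
`[s - ε, 1]` and cover `[s + ε, 1]`, so the Riemann sum is uniformly within `ε` of the class of
`s ↦ 1 - s`.
-/

namespace MeasureTheory.Lp

variable {α E : Type*} [MeasurableSpace α] {μ : Measure α} [NormedAddCommGroup E]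
  {p : ENNReal}

theorem coeFn_sum {ι : Type*} (s : Finset ι) (f : ι → Lp E p μ) :
    ⇑(∑ i ∈ s, f i) =ᵐ[μ] ∑ i ∈ s, ⇑(f i) := by
  classical
  induction s using Finset.induction_on with
  | empty => simpa using Lp.coeFn_zero E p μ
  | insert c s hc ih =>
    rw [Finset.sum_insert hc, Finset.sum_insert hc]
    exact (Lp.coeFn_add _ _).trans (EventuallyEq.rfl.add ih)

theorem dist_eq_one_of_ae_eq_indicator {s t : Set α} (hst : s ⊆ t) (hμ : μ (t \ s) ≠ 0)
    {f g : Lp ℝ ⊤ μ} (hf : f =ᵐ[μ] s.indicator fun _ => 1)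
    (hg : g =ᵐ[μ] t.indicator fun _ => 1) : dist g f = 1 := by
  have hgf : ⇑g - ⇑f =ᵐ[μ] (t \ s).indicator fun _ => 1 := by
    rw [indicator_sdiff hst]
    exact hg.sub hf
  rw [Lp.dist_def, eLpNorm_congr_ae hgf, eLpNorm_exponent_top,
    eLpNormEssSup_indicator_const_eq _ _ hμ]
  simp

end MeasureTheory.Lp

theorem TopologicalSpace.IsSeparable.countable_of_pairwise_le_dist {X : Type*}
    [PseudoMetricSpace X] {t A : Set X} (ht : IsSeparable t) (hA : A ⊆ t) {ε : ℝ} (hε : 0 < ε)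
    (hsep : A.Pairwise fun x y => ε ≤ dist x y) : A.Countable := by
  obtain ⟨c, hc, htc⟩ := ht
  have hnear : ∀ x ∈ A, ∃ y ∈ c, dist x y < ε / 2 := fun x hx =>
    Metric.mem_closure_iff.1 (htc (hA hx)) _ (half_pos hε)
  choose! f hfc hf using hnear
  refine MapsTo.countable_of_injOn hfc (fun x hx y hy hxy => ?_) hc
  by_contra hne
  have hx' := hf x hx
  rw [hxy] at hx'
  linarith [hsep hx hy hne, hf y hy, dist_triangle_right x y (f y)]

theorem MeasureTheory.AEStronglyMeasurable.measure_eq_zero_of_pairwise_le_dist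
    {α E : Type*} [MeasurableSpace α] {μ : Measure α} [NullSingletonClass μ] [PseudoMetricSpace E]
    {f : α → E} (hf : AEStronglyMeasurable f μ) {s : Set α} {ε : ℝ} (hε : 0 < ε)
    (hsep : s.Pairwise fun x y => ε ≤ dist (f x) (f y)) : μ s = 0 := by
  obtain ⟨t, ht, hft⟩ := hf.isSeparable_ae_range
  have hinj : InjOn f s := fun x hx y hy hxy => by
    by_contra hne
    have : ε ≤ dist (f x) (f y) := hsep hx hy hne
    rw [hxy, dist_self] at this
    linarith
  have hcount : (s ∩ f ⁻¹' t).Countable := by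
    refine countable_of_injective_of_countable_image (hinj.mono inter_subset_left) ?_
    refine ht.countable_of_pairwise_le_dist (image_subset_iff.2 inter_subset_right) hε ?_
    rintro _ ⟨x, hx, rfl⟩ _ ⟨y, hy, rfl⟩ hne
    exact hsep hx.1 hy.1 (ne_of_apply_ne f hne)
  refine measure_mono_null (fun x hx => ?_) (measure_union_null (hcount.measure_zero μ)
    (ae_iff.1 hft))
  by_cases hxt : f x ∈ t
  exacts [Or.inl ⟨hx, hxt⟩, Or.inr hxt]

section IntervalLengths

variable {ι : Type*} {T : Finset ι} {a b : ι → ℝ}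

theorem sum_sub_le_of_forall_Icc_subset (hab : ∀ i ∈ T, a i ≤ b i)
    (hdisj : (T : Set ι).PairwiseDisjoint fun i => Ioo (a i) (b i)) {c d : ℝ} (hcd : c ≤ d)
    (hsub : ∀ i ∈ T, c ≤ a i ∧ b i ≤ d) : ∑ i ∈ T, (b i - a i) ≤ d - c := by
  refine (ENNReal.ofReal_le_ofReal_iff (sub_nonneg.2 hcd)).1 ?_
  calc ENNReal.ofReal (∑ i ∈ T, (b i - a i))
      = ∑ i ∈ T, volume (Ioo (a i) (b i)) := by
        rw [ENNReal.ofReal_sum_of_nonneg fun i hi => sub_nonneg.2 (hab i hi)]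
        simp only [Real.volume_Ioo]
    _ = volume (⋃ i ∈ T, Ioo (a i) (b i)) :=
        (measure_biUnion_finset hdisj fun _ _ => measurableSet_Ioo).symm
    _ ≤ volume (Ioo c d) :=
        measure_mono (iUnion₂_subset fun i hi => Ioo_subset_Ioo (hsub i hi).1 (hsub i hi).2)
    _ = ENNReal.ofReal (d - c) := Real.volume_Ioo

theorem sub_le_sum_sub_of_Icc_subset_biUnion (hab : ∀ i ∈ T, a i ≤ b i) {c d : ℝ}
    (hcov : Icc c d ⊆ ⋃ i ∈ T, Icc (a i) (b i)) : d - c ≤ ∑ i ∈ T, (b i - a i) := by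
  have hnonneg : 0 ≤ ∑ i ∈ T, (b i - a i) :=
    Finset.sum_nonneg fun i hi => sub_nonneg.2 (hab i hi)
  have hle : ENNReal.ofReal (d - c) ≤ ENNReal.ofReal (∑ i ∈ T, (b i - a i)) :=
    calc ENNReal.ofReal (d - c) = volume (Icc c d) := Real.volume_Icc.symm
      _ ≤ volume (⋃ i ∈ T, Icc (a i) (b i)) := measure_mono hcov
      _ ≤ ∑ i ∈ T, volume (Icc (a i) (b i)) := measure_biUnion_finset_le _ _
      _ = ENNReal.ofReal (∑ i ∈ T, (b i - a i)) := by
        rw [ENNReal.ofReal_sum_of_nonneg fun i hi => sub_nonneg.2 (hab i hi)]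
        simp only [Real.volume_Icc]
  rcases ENNReal.ofReal_le_ofReal_iff'.1 hle with h | h <;> linarith

end IntervalLengths

theorem IsMcShanePartition.abs_sum_filter_sub_le {n : ℕ} {a b t : Fin n → ℝ} {ε s : ℝ}
    (hP : IsMcShanePartition n a b t) (hδ : SubordinateTo n a b t fun _ => ε) (hε : 0 ≤ ε)
    (hs : s ∈ Icc (0 : ℝ) 1) :
    |∑ i with s ≤ t i, (b i - a i) - (1 - s)| ≤ ε := by
  obtain ⟨hab, -, hcov, hdisj⟩ := hP
  have hb : ∀ i, b i ≤ 1 := fun i =>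
    (hcov ▸ mem_iUnion.2 ⟨i, right_mem_Icc.2 (hab i)⟩ : b i ∈ Icc (0 : ℝ) 1).2
  have hupper := sum_sub_le_of_forall_Icc_subset (T := {i | s ≤ t i})
    (fun i _ => hab i) (fun i _ j _ hij => disjoint_iff_inter_eq_empty.2 (hdisj hij))
    (c := s - ε) (d := 1) (by linarith [hs.2])
    (fun i hi => ⟨by linarith [(hδ i).1, (Finset.mem_filter.1 hi).2], hb i⟩)
  have hlower := sub_le_sum_sub_of_Icc_subset_biUnion (T := {i | s ≤ t i})
    (fun i _ => hab i) (c := s + ε) (d := 1) fun x hx => by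
      obtain ⟨i, hi⟩ := mem_iUnion.1
        (hcov ▸ ⟨by linarith [hs.1, hx.1], hx.2⟩ : x ∈ ⋃ i, Icc (a i) (b i))
      refine mem_iUnion₂.2 ⟨i, Finset.mem_filter.2 ⟨Finset.mem_univ i, ?_⟩, hi⟩
      by_contra! hti
      linarith [(hδ i).2, hi.2, hx.1]
  rw [abs_le]
  constructor <;> linarith

theorem MeasureTheory.Lp.coeFn_sum_smul_ae_eq_indicator_Iic {μ : Measure ℝ} {p : ENNReal}
    {ι : Type*} [Fintype ι] {c t : ι → ℝ} {f : ι → Lp ℝ p μ}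
    (hf : ∀ i, f i =ᵐ[μ] (Iic (t i)).indicator fun _ => 1) :
    ⇑(∑ i, c i • f i) =ᵐ[μ] fun x => ∑ i with x ≤ t i, c i := by
  filter_upwards [Lp.coeFn_sum Finset.univ fun i => c i • f i,
    ae_all_iff.2 fun i => (Lp.coeFn_smul (c i) (f i)).trans ((hf i).const_smul (c i))]
    with x hsum hterm
  rw [hsum, Finset.sum_apply, Finset.sum_filter]
  refine Finset.sum_congr rfl fun i _ => ?_
  rw [hterm i]
  by_cases hx : x ≤ t i <;> simp [hx]

local notation "μ₀₁" => volume.restrict (Icc (0 : ℝ) 1)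

theorem memLp_top_one_sub : MemLp (fun x : ℝ => 1 - x) ⊤ μ₀₁ := by
  refine memLp_top_of_bound (continuous_const.sub continuous_id).aestronglyMeasurable 1 ?_
  filter_upwards [ae_restrict_mem measurableSet_Icc] with x hx
  rw [Real.norm_eq_abs, abs_le]
  constructor <;> linarith [hx.1, hx.2]

section IndicatorIic

variable {φ : ℝ → Lp ℝ ⊤ μ₀₁}

theorem hasMcShaneIntegral_of_ae_eq_indicator_Iic
    (hφ : ∀ t ∈ Icc (0 : ℝ) 1, φ t =ᵐ[μ₀₁] (Iic t).indicator fun _ => 1) :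
    HasMcShaneIntegral φ (memLp_top_one_sub.toLp _) := by
  intro ε hε
  refine ⟨fun _ => ε, fun _ _ => hε, fun n a b t hP hδ => ?_⟩
  have hsum := Lp.coeFn_sum_smul_ae_eq_indicator_Iic (c := fun i => b i - a i)
    fun i => hφ (t i) (hP.2.1 i)
  refine (Lp.norm_le_of_ae_bound hε.le ?_).trans_eq (by simp)
  filter_upwards [Lp.coeFn_sub (memLp_top_one_sub.toLp _) (∑ i, (b i - a i) • φ (t i)),
    memLp_top_one_sub.coeFn_toLp, hsum,
    ae_restrict_mem measurableSet_Icc] with x hsub hw hS hx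
  rw [hsub, Pi.sub_apply, hw, hS, Real.norm_eq_abs, abs_sub_comm]
  exact hP.abs_sum_filter_sub_le hδ hε.le hx

theorem not_integrable_of_ae_eq_indicator_Iic
    (hφ : ∀ t ∈ Icc (0 : ℝ) 1, φ t =ᵐ[μ₀₁] (Iic t).indicator fun _ => 1) :
    ¬ Integrable φ μ₀₁ := by
  intro hint
  have hdist : ∀ x ∈ Icc (0 : ℝ) 1, ∀ y ∈ Icc (0 : ℝ) 1, x < y → dist (φ y) (φ x) = 1 := by
    intro x hx y hy hxy
    refine Lp.dist_eq_one_of_ae_eq_indicator (Iic_subset_Iic.2 hxy.le) ?_ (hφ x hx) (hφ y hy)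
    have hIoc : μ₀₁ (Ioc x y) = ENNReal.ofReal (y - x) := by
      rw [Measure.restrict_apply measurableSet_Ioc,
        inter_eq_left.2 (Ioc_subset_Icc_self.trans (Icc_subset_Icc hx.1 hy.2)), Real.volume_Ioc]
    refine (measure_mono_null (fun z hz => ⟨hz.2, not_le.2 hz.1⟩ : Ioc x y ⊆ Iic y \ Iic x)).mt ?_
    simpa [hIoc] using hxy
  have hsep : (Icc (0 : ℝ) 1).Pairwise fun x y => 1 ≤ dist (φ x) (φ y) := by
    intro x hx y hy hne
    rcases hne.lt_or_gt with h | h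
    · rw [dist_comm, hdist x hx y hy h]
    · rw [hdist y hy x hx h]
  have := hint.aestronglyMeasurable.measure_eq_zero_of_pairwise_le_dist one_pos hsep
  simp [Real.volume_Icc] at this

end IndicatorIic

/-- 3F: the function `φ : [0,1] → L∞([0,1])` sending `t` to the class of the characteristic
function of `[0,t]` is bounded and McShane integrable, but not Bochner integrable. -/
theorem stmt17 (φ : ℝ → Lp ℝ ⊤ (volume.restrict (Set.Icc (0:ℝ) 1)))
    (hφ : ∀ t ∈ Set.Icc (0:ℝ) 1, φ t =
      indicatorConstLp ⊤ (measurableSet_Icc : MeasurableSet (Set.Icc (0:ℝ) t))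
        ((lt_of_le_of_lt (Measure.restrict_apply_le _ _)
          (by simp [Real.volume_Icc] : volume (Set.Icc (0:ℝ) t) < ⊤)).ne)
        (1:ℝ)) :
    (∃ M : ℝ, ∀ t ∈ Set.Icc (0:ℝ) 1, ‖φ t‖ ≤ M) ∧
    (∃ w, HasMcShaneIntegral φ w) ∧
    ¬ Integrable φ (volume.restrict (Set.Icc (0:ℝ) 1)) := by
  have hφIic : ∀ t ∈ Icc (0 : ℝ) 1, φ t =ᵐ[μ₀₁] (Iic t).indicator fun _ => 1 := by
    intro t ht
    filter_upwards [hφ t ht ▸ indicatorConstLp_coeFn, ae_restrict_mem measurableSet_Icc]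
      with x hφx hx
    simp [hφx, indicator_apply, hx.1]
  refine ⟨⟨1, fun t ht => ?_⟩, ⟨_, hasMcShaneIntegral_of_ae_eq_indicator_Iic hφIic⟩,
    not_integrable_of_ae_eq_indicator_Iic hφIic⟩
  rw [hφ t ht]
  exact norm_indicatorConstLp_le.trans (by simp)
end
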